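/- arXiv:2403.03381 — 4 statements merged into one kernel-verified Lean document; each statement's English description precedes it below -/
import Mathlib

section
/- If a symmetric 2-(36,15,6) design admits an automorphism of order two, then the number f of points fixed by that automorphism satisfies f ∈ {0, 4, 6, 8, 10, 12, 16}. -/
/-- A symmetric 2-(36,15,6) design, given as a list of 36 blocks on the point set `Fin 36`:
every block has 15 points and every two distinct points lie in exactly 6 common blocks. -/
def IsDesign (B : Fin 36 → Finset (Fin 36)) : Prop :=
  (∀ i, (B i).card = 15) ∧
    ∀ x y : Fin 36, x ≠ y →
      (Finset.univ.filter fun i => x ∈ B i ∧ y ∈ B i).card = 6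

/-- `B` admits an automorphism of order two fixing exactly `f` points. -/
def HasOrder2AutWithFixed (B : Fin 36 → Finset (Fin 36)) (f : ℕ) : Prop :=
  ∃ φ ψ : Equiv.Perm (Fin 36),
    (∀ i, B (ψ i) = (B i).image φ) ∧
    (⇑φ ∘ ⇑φ = id) ∧ ⇑φ ≠ (id : Fin 36 → Fin 36) ∧
    (Finset.univ.filter fun x => φ x = x).card = f

/-!
The incidence matrix `N` of a symmetric `2-(v, k, λ)` design satisfies `N Nᵀ = (k - λ) I + λ J`
and `N J = J N = k J`, so it is invertible, `Nᵀ N = (k - λ) I + λ J` (two blocks meet in `λ`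
points), and an automorphism `(φ, ψ)`, which conjugates the permutation matrix of `φ` into that
of `ψ`, fixes as many blocks as points.

Let `φ` be an involution with `f` fixed points, so `f` is even. Say that a block separates a
moved point `w` if it contains exactly one of `w, φ w`. Each moved point is separated by
`2 (k - λ) = 18` blocks, none of them fixed, so `f ≤ 18`. For moved points `y, z` of different
orbits, the signed count `∑ᵢ (1_y - 1_{φ y}) (1_z - 1_{φ z})` vanishes and `ψ` pairs off the
blocks separating both, so their number is divisible by `4`. When `36 - f ≡ 2 (mod 4)` this leaves
at least two moved blocks separating neither `y` nor `z`, and double counting gives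
`2 (34 - f) ≤ (18 - f)²`, which excludes `f = 14, 18`. If `f = 2`, with fixed points `x, y`, every
moved block through `x` meets its image in a `φ`-stable set of even size `λ = 6` containing
`x`, hence also `y`; so `x, y` lie in at least `15 - 2 > 6` common blocks.
-/

open Finset Function Matrix

theorem Finset.even_card_filter_ne_of_involutive {α : Type*} [DecidableEq α] {s : Finset α}
    {g : α → α} (hg : Involutive g) (hs : ∀ x ∈ s, g x ∈ s) : Even #{x ∈ s | g x ≠ x} := by
  rw [← ZMod.natCast_eq_zero_iff_even, card_eq_sum_ones, Nat.cast_sum]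
  refine sum_involution (fun x _ => g x) (fun _ _ => by decide) (fun x hx _ => (mem_filter.1 hx).2)
    (fun x hx => ?_) (fun x _ => hg x)
  obtain ⟨hxs, hx⟩ := mem_filter.1 hx
  exact mem_filter.2 ⟨hs x hxs, by rw [hg x]; exact hx.symm⟩

theorem Finset.card_filter_not_iff_add_two_mul {α : Type*} [DecidableEq α] (s : Finset α)
    (p q : α → Prop) [DecidablePred p] [DecidablePred q] :
    #{a ∈ s | ¬(p a ↔ q a)} + 2 * #{a ∈ s | p a ∧ q a} = #{a ∈ s | p a} + #{a ∈ s | q a} := by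
  have h_union := card_union_add_card_inter {a ∈ s | p a} {a ∈ s | q a}
  have h_split := card_filter_add_card_filter_not (s := {a ∈ s | p a ∨ q a}) (fun a => p a ∧ q a)
  rw [← filter_or, ← filter_and] at h_union
  rw [filter_filter, filter_filter] at h_split
  have h_and : {a ∈ s | (p a ∨ q a) ∧ p a ∧ q a} = {a ∈ s | p a ∧ q a} := by
    ext; simp only [mem_filter]; tauto
  have h_xor : {a ∈ s | (p a ∨ q a) ∧ ¬(p a ∧ q a)} = {a ∈ s | ¬(p a ↔ q a)} := by
    ext; simp only [mem_filter]; tauto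
  rw [h_and, h_xor] at h_split
  omega

theorem Finset.card_filter_not_of_subset {α : Type*} [Fintype α] [DecidableEq α] {s : Finset α}
    {p : α → Prop} [DecidablePred p] (h : ∀ a, p a → a ∈ s) :
    #{a ∈ s | ¬p a} = #s - #{a | p a} := by
  rw [filter_not, card_sdiff_of_subset (filter_subset _ _)]
  congr 2
  ext a
  simpa using h a

namespace Matrix

variable {n K : Type*} [Fintype n] [DecidableEq n] [Field K] {N : Matrix n n K} {a b c : K}

theorem mul_transpose_sub_eq_smul_one (hc : c ≠ 0)
    (hNN : N * Nᵀ = a • 1 + b • of fun _ _ => 1)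
    (hNJ : N * of (fun _ _ => 1) = c • of fun _ _ => 1) :
    N * (Nᵀ - (b / c) • of fun _ _ => 1) = a • 1 := by
  rw [Matrix.mul_sub, hNN, Matrix.mul_smul, hNJ, smul_smul, div_mul_cancel₀ b hc,
    add_sub_cancel_right]

theorem isUnit_of_mul_transpose_eq (ha : a ≠ 0) (hc : c ≠ 0)
    (hNN : N * Nᵀ = a • 1 + b • of fun _ _ => 1)
    (hNJ : N * of (fun _ _ => 1) = c • of fun _ _ => 1) : IsUnit N :=
  IsUnit.of_mul_eq_one (a⁻¹ • (Nᵀ - (b / c) • of fun _ _ => 1)) <| by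
    rw [Matrix.mul_smul, mul_transpose_sub_eq_smul_one hc hNN hNJ, smul_smul, inv_mul_cancel₀ ha,
      one_smul]

theorem transpose_mul_self_eq (ha : a ≠ 0) (hc : c ≠ 0)
    (hNN : N * Nᵀ = a • 1 + b • of fun _ _ => 1)
    (hNJ : N * of (fun _ _ => 1) = c • of fun _ _ => 1)
    (hJN : of (fun _ _ => 1) * N = c • of fun _ _ => 1) :
    Nᵀ * N = a • 1 + b • of fun _ _ => 1 := by
  have h : N * (a⁻¹ • (Nᵀ - (b / c) • of fun _ _ => 1)) = 1 := by
    rw [Matrix.mul_smul, mul_transpose_sub_eq_smul_one hc hNN hNJ, smul_smul, inv_mul_cancel₀ ha,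
      one_smul]
  rw [mul_eq_one_comm, Matrix.smul_mul, Matrix.sub_mul, Matrix.smul_mul, hJN, smul_smul,
    div_mul_cancel₀ b hc, inv_smul_eq_iff₀ ha] at h
  exact sub_eq_iff_eq_add.1 h

end Matrix

variable {α : Type*}

def IsAutomorphism (B : α → Finset α) (φ ψ : Equiv.Perm α) : Prop :=
  ∀ x i, φ x ∈ B (ψ i) ↔ x ∈ B i

abbrev Separates (B : α → Finset α) (φ : α → α) (i w : α) : Prop :=
  ¬(w ∈ B i ↔ φ w ∈ B i)

namespace IsAutomorphism

variable {B : α → Finset α} {φ ψ : Equiv.Perm α}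

theorem of_image [DecidableEq α] (h : ∀ i, B (ψ i) = (B i).image φ) : IsAutomorphism B φ ψ :=
  fun x i => by rw [h, φ.injective.mem_finset_image]

theorem mem_iff (h : IsAutomorphism B φ ψ) (hφ : Involutive φ) (x i : α) :
    x ∈ B (ψ i) ↔ φ x ∈ B i := by
  rw [← h (φ x) i, hφ]

theorem involutive_of_injective (h : IsAutomorphism B φ ψ) (hφ : Involutive φ)
    (hB : Injective B) : Involutive ψ := fun i =>
  hB <| by ext x; rw [h.mem_iff hφ, h.mem_iff hφ, hφ]

theorem not_separates_of_fixed (h : IsAutomorphism B φ ψ) {i : α} (hi : ψ i = i) (w : α) :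
    ¬Separates B φ i w :=
  not_not_intro (by simpa [hi] using (h w i).symm)

theorem separates_apply_iff (h : IsAutomorphism B φ ψ) (hφ : Involutive φ) (i w : α) :
    Separates B φ (ψ i) w ↔ Separates B φ i w := by
  rw [Separates, Separates, h.mem_iff hφ, h.mem_iff hφ, hφ]
  tauto

variable [Fintype α] [DecidableEq α]

theorem filter_separates_subset (h : IsAutomorphism B φ ψ) (w : α) :
    ({i | Separates B φ i w} : Finset α) ⊆ ({i | ψ i ≠ i} : Finset α) := fun i hi =>
  mem_filter.2 ⟨mem_univ i, fun hfix => h.not_separates_of_fixed hfix w (mem_filter.1 hi).2⟩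

theorem even_card_agree (h : IsAutomorphism B φ ψ) (hφ : Involutive φ) (hψ : Involutive ψ)
    (y z : α) : Even #{i | Separates B φ i y ∧ Separates B φ i z ∧ (y ∈ B i ↔ z ∈ B i)} := by
  have h_moved : ∀ i ∈ ({i | Separates B φ i y ∧ Separates B φ i z ∧ (y ∈ B i ↔ z ∈ B i)} :
      Finset α), ψ i ≠ i :=
    fun i hi hfix => h.not_separates_of_fixed hfix y (mem_filter.1 hi).2.1
  rw [← filter_true_of_mem h_moved]
  refine even_card_filter_ne_of_involutive hψ fun i hi => ?_
  simp only [mem_filter, mem_univ, true_and, h.separates_apply_iff hφ, h.mem_iff hφ] at hi ⊢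
  tauto

end IsAutomorphism

variable [Fintype α] [DecidableEq α]

structure IsSymmetricDesign (B : α → Finset α) (k l : ℕ) : Prop where
  card_block : ∀ i, #(B i) = k
  card_filter_mem_and_mem : ∀ x y, x ≠ y → #{i | x ∈ B i ∧ y ∈ B i} = l

def incidenceMatrix (B : α → Finset α) : Matrix α α ℚ :=
  of fun x i => if x ∈ B i then 1 else 0

section incidenceMatrix

variable (B : α → Finset α)

theorem incidenceMatrix_mul_transpose_apply (x y : α) :
    (incidenceMatrix B * (incidenceMatrix B)ᵀ) x y = #{i | x ∈ B i ∧ y ∈ B i} := by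
  simp only [incidenceMatrix, mul_apply, transpose_apply, of_apply, ite_zero_mul_ite_zero,
    mul_one, sum_boole]

theorem transpose_mul_incidenceMatrix_apply (i j : α) :
    ((incidenceMatrix B)ᵀ * incidenceMatrix B) i j = #(B i ∩ B j) := by
  simp [incidenceMatrix, mul_apply, inter_comm]

theorem incidenceMatrix_mul_allOnes (r : ℕ) (hr : ∀ x, #{i | x ∈ B i} = r) :
    incidenceMatrix B * (of fun _ _ => 1) = (r : ℚ) • of fun _ _ => 1 := by
  ext x y
  simp [incidenceMatrix, mul_apply, hr]

theorem allOnes_mul_incidenceMatrix (k : ℕ) (hk : ∀ i, #(B i) = k) :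
    (of fun _ _ => 1) * incidenceMatrix B = (k : ℚ) • of fun _ _ => 1 := by
  ext x i
  simp [incidenceMatrix, mul_apply, hk]

end incidenceMatrix

namespace IsSymmetricDesign

variable {B : α → Finset α} {k l : ℕ} {φ ψ : Equiv.Perm α}

theorem card_filter_mem_mul (hB : IsSymmetricDesign B k l) (x : α) :
    #{i | x ∈ B i} * (k - 1) = l * (Fintype.card α - 1) := by
  have h := card_mul_eq_card_mul (fun i y => x ∈ B i ∧ y ∈ B i)
    (s := {i | x ∈ B i}) (t := univ.erase x) (m := k - 1) (n := l) ?_ ?_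
  · rwa [card_erase_of_mem (mem_univ x), card_univ, mul_comm _ l] at h
  · intro i hi
    have hx : x ∈ B i := (mem_filter.1 hi).2
    rw [← hB.card_block i, ← card_erase_of_mem hx]
    congr 1
    ext y
    simp [bipartiteAbove, hx, and_comm]
  · intro y hy
    rw [← hB.card_filter_mem_and_mem x y (ne_of_mem_erase hy).symm]
    congr 1
    ext i
    simp [bipartiteBelow]

theorem card_filter_mem (hB : IsSymmetricDesign B k l) (hk : 2 ≤ k) (x : α) :
    #{i | x ∈ B i} = k := by
  have h_const (y : α) : #{i | y ∈ B i} = #{i | x ∈ B i} :=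
    Nat.eq_of_mul_eq_mul_right (by omega : 0 < k - 1)
      ((hB.card_filter_mem_mul y).trans (hB.card_filter_mem_mul x).symm)
  have h := card_mul_eq_card_mul (fun y i => y ∈ B i) (s := univ) (t := univ)
    (fun y _ => by simpa [bipartiteAbove] using h_const y)
    (fun i _ => by simpa [bipartiteBelow] using hB.card_block i)
  exact Nat.eq_of_mul_eq_mul_left (card_pos.2 ⟨x, mem_univ x⟩) h

theorem incidenceMatrix_mul_transpose (hB : IsSymmetricDesign B k l) (hk : 2 ≤ k) :
    incidenceMatrix B * (incidenceMatrix B)ᵀ =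
      ((k : ℚ) - l) • 1 + (l : ℚ) • of fun _ _ => 1 := by
  ext x y
  rw [incidenceMatrix_mul_transpose_apply]
  rcases eq_or_ne x y with rfl | hxy
  · simp [hB.card_filter_mem hk]
  · simp [hB.card_filter_mem_and_mem x y hxy, one_apply_ne hxy]

theorem isUnit_incidenceMatrix (hB : IsSymmetricDesign B k l) (hk : 2 ≤ k) (hlk : l < k) :
    IsUnit (incidenceMatrix B) :=
  isUnit_of_mul_transpose_eq (sub_ne_zero.2 (by exact_mod_cast hlk.ne')) (by positivity)
    (hB.incidenceMatrix_mul_transpose hk) (incidenceMatrix_mul_allOnes B k (hB.card_filter_mem hk))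

theorem card_inter (hB : IsSymmetricDesign B k l) (hk : 2 ≤ k) (hlk : l < k) {i j : α}
    (hij : i ≠ j) : #(B i ∩ B j) = l := by
  have h := transpose_mul_self_eq (sub_ne_zero.2 (by exact_mod_cast hlk.ne'))
    (by positivity : (k : ℚ) ≠ 0) (hB.incidenceMatrix_mul_transpose hk)
    (incidenceMatrix_mul_allOnes B k (hB.card_filter_mem hk))
    (allOnes_mul_incidenceMatrix B k hB.card_block)
  have h_ij := congrFun₂ h i j
  rw [transpose_mul_incidenceMatrix_apply] at h_ij
  simpa [one_apply_ne hij] using h_ij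

theorem injective (hB : IsSymmetricDesign B k l) (hk : 2 ≤ k) (hlk : l < k) : Injective B := by
  intro i j hij
  by_contra hne
  have h := hB.card_inter hk hlk hne
  rw [hij, inter_self, hB.card_block] at h
  omega

theorem card_fixedPoints_eq (hB : IsSymmetricDesign B k l) (hk : 2 ≤ k) (hlk : l < k)
    (haut : IsAutomorphism B φ ψ) : #{x | φ x = x} = #{i | ψ i = i} := by
  have h : φ.permMatrix ℚ * incidenceMatrix B = incidenceMatrix B * ψ.permMatrix ℚ := by
    rw [PEquiv.toMatrix_toPEquiv_mul, PEquiv.mul_toMatrix_toPEquiv]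
    ext x i
    simp [incidenceMatrix, ← haut x (ψ.symm i)]
  have hN := hB.isUnit_incidenceMatrix hk hlk
  have h_trace : (φ.permMatrix ℚ).trace = (ψ.permMatrix ℚ).trace := by
    rw [← trace_conj hN (ψ.permMatrix ℚ), ← h,
      mul_nonsing_inv_cancel_right _ _ ((isUnit_iff_isUnit_det _).1 hN)]
  have h_ncard (g : Equiv.Perm α) : (fixedPoints g).ncard = #{x | g x = x} := by
    rw [← Set.ncard_coe_finset]
    congr
    ext
    simp [IsFixedPt]
  rw [trace_permutation, trace_permutation, h_ncard, h_ncard] at h_trace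
  exact_mod_cast h_trace

theorem card_separating_blocks (hB : IsSymmetricDesign B k l) (hk : 2 ≤ k) {w : α}
    (hw : φ w ≠ w) : #{i | Separates B φ i w} = 2 * (k - l) := by
  have h := card_filter_not_iff_add_two_mul univ (fun i => w ∈ B i) (fun i => φ w ∈ B i)
  rw [hB.card_filter_mem hk, hB.card_filter_mem hk, hB.card_filter_mem_and_mem w _ hw.symm] at h
  have h' : #{i | Separates B φ i w} + 2 * l = k + k := h
  omega

theorem card_separated_points (hB : IsSymmetricDesign B k l) (hk : 2 ≤ k) (hlk : l < k)
    (haut : IsAutomorphism B φ ψ) (hφ : Involutive φ) {i : α} (hi : ψ i ≠ i) :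
    #{w | Separates B φ i w} = 2 * (k - l) := by
  have h := card_filter_not_iff_add_two_mul univ (· ∈ B i) (· ∈ B (ψ i))
  have h_inter : #{w | w ∈ B i ∧ w ∈ B (ψ i)} = l := by
    rw [← hB.card_inter hk hlk (Ne.symm hi)]
    congr 1
    ext
    simp
  simp only [filter_mem_eq_inter, univ_inter, hB.card_block, h_inter] at h
  have h' : #{w | Separates B φ i w} + 2 * l = k + k := by
    simpa only [Separates, haut.mem_iff hφ] using h
  omega

theorem card_agree_eq_card_disagree (hB : IsSymmetricDesign B k l) {φ : α → α}
    (hφ : Involutive φ) {y z : α} (hyz : y ≠ z) (hyz' : y ≠ φ z) :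
    #{i | Separates B φ i y ∧ Separates B φ i z ∧ (y ∈ B i ↔ z ∈ B i)} =
      #{i | Separates B φ i y ∧ Separates B φ i z ∧ ¬(y ∈ B i ↔ z ∈ B i)} := by
  let e (u i : α) : ℤ := if u ∈ B i then 1 else 0
  have h_pair (u v : α) (huv : u ≠ v) : ∑ i, e u i * e v i = l := by
    simp only [e, ite_zero_mul_ite_zero, mul_one, sum_boole, hB.card_filter_mem_and_mem u v huv]
  have h_sum : ∑ i, (e y i - e (φ y) i) * (e z i - e (φ z) i) = 0 := by
    simp only [sub_mul, mul_sub, sum_sub_distrib]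
    rw [h_pair y z hyz, h_pair y (φ z) hyz', h_pair (φ y) z (fun h => hyz' (by rw [← h, hφ])),
      h_pair (φ y) (φ z) (hφ.injective.ne hyz)]
    ring
  have h_term (i : α) : (e y i - e (φ y) i) * (e z i - e (φ z) i) =
      (if Separates B φ i y ∧ Separates B φ i z ∧ (y ∈ B i ↔ z ∈ B i) then 1 else 0) -
      (if Separates B φ i y ∧ Separates B φ i z ∧ ¬(y ∈ B i ↔ z ∈ B i) then 1 else 0) := by
    by_cases h1 : y ∈ B i <;> by_cases h2 : φ y ∈ B i <;> by_cases h3 : z ∈ B i <;>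
      by_cases h4 : φ z ∈ B i <;> simp [e, h1, h2, h3, h4]
  rw [sum_congr rfl fun i _ => h_term i, sum_sub_distrib, sum_boole, sum_boole, sub_eq_zero]
    at h_sum
  exact_mod_cast h_sum

theorem four_dvd_card_separating_both (hB : IsSymmetricDesign B k l)
    (haut : IsAutomorphism B φ ψ) (hφ : Involutive φ) (hψ : Involutive ψ) {y z : α}
    (hyz : y ≠ z) (hyz' : y ≠ φ z) : 4 ∣ #{i | Separates B φ i y ∧ Separates B φ i z} := by
  have h := card_filter_add_card_filter_not (s := {i | Separates B φ i y ∧ Separates B φ i z})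
    (fun i => y ∈ B i ↔ z ∈ B i)
  simp only [filter_filter, and_assoc] at h
  rw [← hB.card_agree_eq_card_disagree hφ hyz hyz'] at h
  obtain ⟨m, hm⟩ := haut.even_card_agree hφ hψ y z
  exact ⟨m, by omega⟩

theorem le_add_two_of_card_fixedPoints_eq_two (hB : IsSymmetricDesign B k l) (hk : 2 ≤ k)
    (hlk : l < k) (hl : Even l) (haut : IsAutomorphism B φ ψ) (hφ : Involutive φ)
    (hfix : #{w | φ w = w} = 2) : k ≤ l + 2 := by
  obtain ⟨x, y, hxy, hxy_eq⟩ := card_eq_two.1 hfix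
  have hmem_fix (w : α) : φ w = w ↔ w = x ∨ w = y := by
    simpa using congrArg (w ∈ ·) hxy_eq
  have hy_mem (i : α) (hi : ψ i ≠ i) (hxi : x ∈ B i) : y ∈ B i := by
    set K := B i ∩ B (ψ i)
    have h_even : Even #{w ∈ K | φ w ≠ w} := even_card_filter_ne_of_involutive hφ fun w hw => by
      simp only [K, mem_inter, haut.mem_iff hφ, hφ w] at hw ⊢
      exact hw.symm
    have h_split := card_filter_add_card_filter_not (s := K) (fun w => φ w = w)
    rw [hB.card_inter hk hlk (Ne.symm hi)] at h_split
    by_contra hy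
    have h_fixK : {w ∈ K | φ w = w} = {x} := by
      ext w
      simp only [K, mem_filter, mem_inter, mem_singleton, haut.mem_iff hφ, hmem_fix]
      constructor
      · rintro ⟨⟨hw, -⟩, rfl | rfl⟩
        · rfl
        · exact absurd hw hy
      · intro hw
        rw [hw, (hmem_fix x).2 (Or.inl rfl)]
        exact ⟨⟨hxi, hxi⟩, Or.inl rfl⟩
    simp only [h_fixK, card_singleton, ← ne_eq] at h_split
    obtain ⟨m, hm⟩ := h_even
    obtain ⟨n, hn⟩ := hl
    omega
  have h_sub : ({i | x ∈ B i} : Finset α) ⊆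
      ({i | x ∈ B i ∧ y ∈ B i} : Finset α) ∪ ({i | ψ i = i} : Finset α) := by
    intro i hi
    simp only [mem_union, mem_filter, mem_univ, true_and] at hi ⊢
    by_cases hψi : ψ i = i
    · exact Or.inr hψi
    · exact Or.inl ⟨hi, hy_mem i hψi hi⟩
  have h_le := (card_le_card h_sub).trans (card_union_le _ _)
  rwa [hB.card_filter_mem hk, hB.card_filter_mem_and_mem x y hxy,
    ← hB.card_fixedPoints_eq hk hlk haut, hfix] at h_le

theorem two_le_card_moved_nonseparating (hB : IsSymmetricDesign B k l) (hk : 2 ≤ k)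
    (haut : IsAutomorphism B φ ψ) (hφ : Involutive φ) (hψ : Involutive ψ)
    (hmod : #{i | ψ i ≠ i} % 4 = 2) {y z : α} (hy : φ y ≠ y) (hz : φ z ≠ z) (hyz : y ≠ z)
    (hyz' : y ≠ φ z) :
    2 ≤ #{i | ψ i ≠ i ∧ ¬Separates B φ i y ∧ ¬Separates B φ i z} := by
  have h_union := card_union_add_card_inter ({i | Separates B φ i y} : Finset α)
    {i | Separates B φ i z}
  rw [← filter_or, ← filter_and, hB.card_separating_blocks hk hy,
    hB.card_separating_blocks hk hz] at h_union
  have h_split := card_filter_add_card_filter_not (s := {i | ψ i ≠ i})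
    (fun i => Separates B φ i y ∨ Separates B φ i z)
  have h_sep : ({i | ψ i ≠ i} : Finset α).filter (fun i => Separates B φ i y ∨ Separates B φ i z)
      = ({i | Separates B φ i y ∨ Separates B φ i z} : Finset α) := by
    ext i
    simp only [mem_filter, mem_univ, true_and, and_iff_right_iff_imp]
    rintro hsep hfix
    exact hsep.elim (haut.not_separates_of_fixed hfix y) (haut.not_separates_of_fixed hfix z)
  rw [h_sep, filter_filter] at h_split
  simp only [not_or] at h_split
  have h4 := hB.four_dvd_card_separating_both haut hφ hψ hyz hyz'
  omega

theorem two_mul_le_of_card_mod_four (hB : IsSymmetricDesign B k l) (hk : 2 ≤ k) (hlk : l < k)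
    (haut : IsAutomorphism B φ ψ) (hφ : Involutive φ) (hψ : Involutive ψ)
    (hmod : #{i | ψ i ≠ i} % 4 = 2) {y : α} (hy : φ y ≠ y) :
    2 * (#{w | φ w ≠ w} - 2) ≤
      (#{i | ψ i ≠ i} - 2 * (k - l)) * (#{w | φ w ≠ w} - 2 * (k - l)) := by
  set P : Finset α := {w | φ w ≠ w}
  set Q : Finset α := {i | ψ i ≠ i}
  have hyP : y ∈ P := by simpa [P] using hy
  have hφyP : φ y ∈ P.erase y := by simpa [P, hφ y] using ⟨hy, hy.symm⟩
  have h := card_mul_le_card_mul (fun z i => ¬Separates B φ i z) (m := 2) (n := #P - 2 * (k - l))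
    (s := (P.erase y).erase (φ y)) (t := {i ∈ Q | ¬Separates B φ i y}) ?_ ?_
  · have ht : #{i ∈ Q | ¬Separates B φ i y} = #Q - 2 * (k - l) := by
      rw [card_filter_not_of_subset fun i hi => haut.filter_separates_subset y (by simpa using hi),
        hB.card_separating_blocks hk hy]
    rwa [card_erase_of_mem hφyP, card_erase_of_mem hyP, Nat.sub_sub, mul_comm, ht] at h
  · intro z hz
    simp only [mem_erase, ne_eq, P, mem_filter, mem_univ, true_and] at hz
    have := hB.two_le_card_moved_nonseparating hk haut hφ hψ hmod hy hz.2.2 (Ne.symm hz.2.1)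
      (fun h => hz.1 (by rw [h, hφ]))
    simpa [bipartiteAbove, filter_filter, Q, and_assoc] using this
  · intro i hi
    simp only [Q, mem_filter, mem_univ, true_and] at hi
    calc #(((P.erase y).erase (φ y)).bipartiteBelow (fun z i => ¬Separates B φ i z) i)
        ≤ #{w ∈ P | ¬Separates B φ i w} :=
          card_le_card (filter_subset_filter _ ((erase_subset _ _).trans (erase_subset _ _)))
      _ = #P - 2 * (k - l) := by
          refine (card_filter_not_of_subset fun w hw => ?_).trans
            (by rw [hB.card_separated_points hk hlk haut hφ hi.1])
          simpa [P] using fun hfix => hw (by rw [hfix])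

end IsSymmetricDesign

theorem fixed_points_of_involution (B : Fin 36 → Finset (Fin 36)) (f : ℕ)
    (hB : IsDesign B) (hA : HasOrder2AutWithFixed B f) :
    f ∈ ({0, 4, 6, 8, 10, 12, 16} : Finset ℕ) := by
  obtain ⟨φ, ψ, himage, hφφ, hφne, rfl⟩ := hA
  have hD : IsSymmetricDesign B 15 6 := ⟨hB.1, hB.2⟩
  have hφ : Involutive φ := congrFun hφφ
  have haut := IsAutomorphism.of_image himage
  have hψ := haut.involutive_of_injective hφ (hD.injective (by norm_num) (by norm_num))
  obtain ⟨y, hy⟩ : ∃ y, φ y ≠ y := not_forall.1 fun h => hφne (funext h)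
  have h_points := card_filter_add_card_filter_not (s := univ) (fun x => φ x = x)
  have h_blocks := card_filter_add_card_filter_not (s := univ) (fun i => ψ i = i)
  rw [← hD.card_fixedPoints_eq (by norm_num) (by norm_num) haut] at h_blocks
  simp only [card_univ, Fintype.card_fin, ← ne_eq] at h_points h_blocks
  have h_even : Even #{x | φ x ≠ x} :=
    even_card_filter_ne_of_involutive hφ fun x _ => mem_univ (φ x)
  have h_le := card_le_card (haut.filter_separates_subset y)
  rw [hD.card_separating_blocks (by norm_num) hy] at h_le
  have h_two :=
    hD.le_add_two_of_card_fixedPoints_eq_two (by norm_num) (by norm_num) (by decide) haut hφ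
  have h_mod := fun hmod =>
    hD.two_mul_le_of_card_mod_four (by norm_num) (by norm_num) haut hφ hψ hmod hy
  generalize #{x | φ x = x} = f at *
  obtain ⟨m, hm⟩ := h_even
  rw [show #{x | φ x ≠ x} = 36 - f by omega, show #{i | ψ i ≠ i} = 36 - f by omega] at h_mod
  have hf : f ≤ 18 := by omega
  interval_cases f <;> first | decide | omega
end

section
/- There is no symmetric 2-(36,15,6) design admitting an automorphism of order two that fixes exactly 14 points. -/
open Finset Matrix

def Hm (B : Fin 36 → Finset (Fin 36)) : Matrix (Fin 36) (Fin 36) ℚ :=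
  Matrix.of fun x i => if x ∈ B i then 1 else -1

lemma deg {B : Fin 36 → Finset (Fin 36)} (hB : IsDesign B) (x : Fin 36) :
    (Finset.univ.filter fun i => x ∈ B i).card = 15 := by
  classical
  have hdc : ∑ y ∈ Finset.univ.erase x,
      (Finset.univ.filter fun i => x ∈ B i ∧ y ∈ B i).card = 210 := by
    rw [Finset.sum_congr rfl (fun y hy => hB.2 x y (Ne.symm (Finset.mem_erase.mp hy).1))]
    rw [Finset.sum_const, Finset.card_erase_of_mem (Finset.mem_univ x), Finset.card_univ]
    simp
  have hswap : ∑ y ∈ Finset.univ.erase x,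
      (Finset.univ.filter fun i => x ∈ B i ∧ y ∈ B i).card
      = 14 * (Finset.univ.filter fun i => x ∈ B i).card := by
    have h1 : ∀ y, (Finset.univ.filter fun i => x ∈ B i ∧ y ∈ B i).card
        = ∑ i : Fin 36, if x ∈ B i ∧ y ∈ B i then 1 else 0 := by
      intro y; rw [Finset.card_filter]
    rw [Finset.sum_congr rfl fun y _ => h1 y, Finset.sum_comm]
    have h2 : ∀ i : Fin 36, (∑ y ∈ Finset.univ.erase x, if x ∈ B i ∧ y ∈ B i then 1 else 0)
        = if x ∈ B i then 14 else 0 := by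
      intro i
      by_cases hx : x ∈ B i
      · simp only [hx, true_and, if_pos]
        rw [← Finset.card_filter]
        have : (Finset.univ.erase x).filter (fun y => y ∈ B i) = (B i).erase x := by
          ext y
          simp [Finset.mem_erase, and_comm]
        rw [this, Finset.card_erase_of_mem hx, hB.1 i]
      · simp [hx]
    rw [Finset.sum_congr rfl fun i _ => h2 i]
    rw [Finset.sum_ite, Finset.sum_const, Finset.sum_const]
    simp [mul_comm]
  omega

lemma rowself {B : Fin 36 → Finset (Fin 36)} (x : Fin 36) :
    ∑ i, Hm B x i * Hm B x i = 36 := by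
  have h : ∀ i, Hm B x i * Hm B x i = 1 := by
    intro i; simp only [Hm, Matrix.of_apply]; split_ifs <;> norm_num
  rw [Finset.sum_congr rfl fun i _ => h i]
  simp

lemma colself {B : Fin 36 → Finset (Fin 36)} (j : Fin 36) :
    ∑ x, Hm B x j * Hm B x j = 36 := by
  have h : ∀ x, Hm B x j * Hm B x j = 1 := by
    intro x; simp only [Hm, Matrix.of_apply]; split_ifs <;> norm_num
  rw [Finset.sum_congr rfl fun x _ => h x]
  simp

lemma rowdot {B : Fin 36 → Finset (Fin 36)} (hB : IsDesign B) {x y : Fin 36} (hxy : x ≠ y) :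
    ∑ i, Hm B x i * Hm B y i = 0 := by
  classical
  have hpt : ∀ i, Hm B x i * Hm B y i =
      4 * ((if x ∈ B i ∧ y ∈ B i then (1:ℚ) else 0))
      - 2 * (if x ∈ B i then (1:ℚ) else 0) - 2 * (if y ∈ B i then (1:ℚ) else 0) + 1 := by
    intro i
    simp only [Hm, Matrix.of_apply]
    by_cases hx : x ∈ B i <;> by_cases hy : y ∈ B i <;> simp [hx, hy] <;> norm_num
  rw [Finset.sum_congr rfl fun i _ => hpt i]
  rw [Finset.sum_add_distrib, Finset.sum_sub_distrib, Finset.sum_sub_distrib,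
    ← Finset.mul_sum, ← Finset.mul_sum, ← Finset.mul_sum]
  rw [Finset.sum_boole, Finset.sum_boole, Finset.sum_boole]
  rw [hB.2 x y hxy, deg hB x, deg hB y]
  simp
  norm_num


lemma HmHmT {B : Fin 36 → Finset (Fin 36)} (hB : IsDesign B) :
    Hm B * (Hm B)ᵀ = (36:ℚ) • 1 := by
  ext x y
  rw [Matrix.mul_apply]
  simp only [Matrix.transpose_apply, Matrix.smul_apply]
  by_cases h : x = y
  · subst h; rw [rowself]; simp [Matrix.one_apply]
  · rw [rowdot hB h]; simp [Matrix.one_apply, h]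

lemma coldot {B : Fin 36 → Finset (Fin 36)} (hB : IsDesign B) {i j : Fin 36} (hij : i ≠ j) :
    ∑ x, Hm B x i * Hm B x j = 0 := by
  have h1 : Hm B * ((36:ℚ)⁻¹ • (Hm B)ᵀ) = (1 : Matrix (Fin 36) (Fin 36) ℚ) := by
    rw [Matrix.mul_smul, HmHmT hB, smul_smul]
    norm_num
  have h2 := mul_eq_one_comm.mp h1
  rw [Matrix.smul_mul] at h2
  have h3 : (Hm B)ᵀ * Hm B = (36:ℚ) • 1 := by
    have := congrArg (fun M => (36:ℚ) • M) h2
    simp only [smul_smul] at this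
    norm_num at this
    exact this
  have h4 := congrFun (congrFun h3 i) j
  rw [Matrix.mul_apply] at h4
  simp only [Matrix.transpose_apply, Matrix.smul_apply, Matrix.one_apply_ne hij,
    smul_eq_mul, mul_zero] at h4
  exact h4

variable {α : Type*} [DecidableEq α]

lemma pair_card (g : α → α) (hg : ∀ j, g (g j) = j) (S : Finset α)
    (h1 : ∀ j ∈ S, g j ≠ j) (h2 : ∀ j ∈ S, g j ∈ S) :
    S.card = 2 * (S.image (fun j => ({j, g j} : Finset α))).card := by
  classical
  have hfib : ∀ a ∈ S.image (fun j => ({j, g j} : Finset α)),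
      (S.filter (fun l => ({l, g l} : Finset α) = a)).card = 2 := by
    intro a ha
    obtain ⟨j, hj, rfl⟩ := Finset.mem_image.mp ha
    have hfil : S.filter (fun l => ({l, g l} : Finset α) = {j, g j}) = {j, g j} := by
      ext l
      simp only [Finset.mem_filter, Finset.mem_insert, Finset.mem_singleton]
      constructor
      · rintro ⟨hlS, hl⟩
        have hmem : l ∈ ({l, g l} : Finset α) := Finset.mem_insert_self _ _
        rw [hl] at hmem
        simpa using hmem
      · rintro (rfl | rfl)
        · exact ⟨hj, rfl⟩
        · exact ⟨h2 j hj, by rw [hg j]; exact Finset.pair_comm _ _⟩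
    rw [hfil, Finset.card_pair (h1 j hj).symm]
  calc S.card = ∑ a ∈ S.image (fun j => ({j, g j} : Finset α)),
        (S.filter (fun l => ({l, g l} : Finset α) = a)).card :=
        Finset.card_eq_sum_card_image _ _
    _ = ∑ _a ∈ S.image (fun j => ({j, g j} : Finset α)), 2 := Finset.sum_congr rfl hfib
    _ = 2 * _ := by rw [Finset.sum_const, smul_eq_mul, mul_comm]

lemma sunflower11 {ι : Type*} [DecidableEq ι] (S : Finset ι) (U : Finset α)
    (A : ι → Finset α) (hS : S.card = 11) (hU : U.card = 11)
    (hA : ∀ k ∈ S, A k ⊆ U ∧ (A k).card = 2)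
    (hI : ∀ k ∈ S, ∀ l ∈ S, k ≠ l → (A k ∩ A l).card = 1) : False := by
  classical
  -- pick k0 k1 distinct in S
  have h0 : S.Nonempty := by rw [← Finset.card_pos, hS]; norm_num
  obtain ⟨k0, hk0⟩ := h0
  have h1 : (S.erase k0).Nonempty := by
    rw [← Finset.card_pos, Finset.card_erase_of_mem hk0, hS]; norm_num
  obtain ⟨k1, hk1'⟩ := h1
  obtain ⟨hk10, hk1⟩ := Finset.mem_erase.mp hk1'
  obtain ⟨c, hc⟩ := Finset.card_eq_one.mp (hI k0 hk0 k1 hk1 (Ne.symm hk10))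
  have hck0 : c ∈ A k0 := (Finset.mem_inter.mp (hc ▸ Finset.mem_singleton_self c)).1
  have hck1 : c ∈ A k1 := (Finset.mem_inter.mp (hc ▸ Finset.mem_singleton_self c)).2
  -- helper to extract the "other" element
  have hextract : ∀ k ∈ S, c ∈ A k → ∃ b, b ≠ c ∧ A k = {c, b} := by
    intro k hk hcAk
    obtain ⟨u, v, huv, h2'⟩ := Finset.card_eq_two.mp (hA k hk).2
    rw [h2'] at hcAk
    rcases Finset.mem_insert.mp hcAk with rfl | hcv
    · exact ⟨v, Ne.symm huv, h2'⟩
    · have : c = v := Finset.mem_singleton.mp hcv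
      subst this
      exact ⟨u, huv, by rw [h2', Finset.pair_comm]⟩
  have hall : ∀ k ∈ S, c ∈ A k := by
    intro k hk
    by_contra hcA
    have hkk0 : k ≠ k0 := fun h => hcA (h ▸ hck0)
    have hkk1 : k ≠ k1 := fun h => hcA (h ▸ hck1)
    obtain ⟨b0, hb0ne, hAk0⟩ := hextract k0 hk0 hck0
    obtain ⟨b1, hb1ne, hAk1⟩ := hextract k1 hk1 hck1
    have hbne : b0 ≠ b1 := by
      intro h
      have heq : A k0 = A k1 := by rw [hAk0, hAk1, h]
      have h1' := hI k0 hk0 k1 hk1 (Ne.symm hk10)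
      rw [heq, Finset.inter_self, (hA k1 hk1).2] at h1'
      norm_num at h1'
    -- any m ∈ S with c ∉ A m has A m = {b0, b1}
    have key : ∀ m ∈ S, m ≠ k0 → m ≠ k1 → c ∉ A m → A m = {b0, b1} := by
      intro m hm hm0 hm1 hcm
      have hb0m : b0 ∈ A m := by
        obtain ⟨u, hu⟩ := Finset.card_eq_one.mp (hI m hm k0 hk0 hm0)
        have huk : u ∈ A m ∧ u ∈ A k0 := Finset.mem_inter.mp (hu ▸ Finset.mem_singleton_self u)
        have hunc : u ≠ c := fun h => hcm (h ▸ huk.1)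
        have : u = b0 := by
          have := huk.2
          rw [hAk0] at this
          rcases Finset.mem_insert.mp this with h | h
          · exact absurd h hunc
          · exact Finset.mem_singleton.mp h
        exact this ▸ huk.1
      have hb1m : b1 ∈ A m := by
        obtain ⟨u, hu⟩ := Finset.card_eq_one.mp (hI m hm k1 hk1 hm1)
        have huk : u ∈ A m ∧ u ∈ A k1 := Finset.mem_inter.mp (hu ▸ Finset.mem_singleton_self u)
        have hunc : u ≠ c := fun h => hcm (h ▸ huk.1)
        have : u = b1 := by
          have := huk.2
          rw [hAk1] at this
          rcases Finset.mem_insert.mp this with h | h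
          · exact absurd h hunc
          · exact Finset.mem_singleton.mp h
        exact this ▸ huk.1
      have hsub : ({b0, b1} : Finset α) ⊆ A m := by
        intro t ht
        rcases Finset.mem_insert.mp ht with rfl | ht
        · exact hb0m
        · exact (Finset.mem_singleton.mp ht) ▸ hb1m
      have hcard : (A m).card ≤ ({b0, b1} : Finset α).card := by
        rw [(hA m hm).2, Finset.card_pair hbne]
      exact (Finset.eq_of_subset_of_card_le hsub hcard).symm
    have hAk : A k = {b0, b1} := key k hk hkk0 hkk1 hcA
    -- pick k3 distinct from k0 k1 k
    have h3 : (((S.erase k0).erase k1).erase k).Nonempty := by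
      rw [← Finset.card_pos]
      have e1 : S.card - 1 ≤ (S.erase k0).card := Finset.pred_card_le_card_erase
      have e2 : (S.erase k0).card - 1 ≤ ((S.erase k0).erase k1).card :=
        Finset.pred_card_le_card_erase
      have e3 : ((S.erase k0).erase k1).card - 1 ≤ (((S.erase k0).erase k1).erase k).card :=
        Finset.pred_card_le_card_erase
      omega
    obtain ⟨k3, hk3'⟩ := h3
    obtain ⟨hk3k, hk3''⟩ := Finset.mem_erase.mp hk3'
    obtain ⟨hk31, hk3'''⟩ := Finset.mem_erase.mp hk3''
    obtain ⟨hk30, hk3⟩ := Finset.mem_erase.mp hk3'''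
    by_cases hc3 : c ∈ A k3
    · obtain ⟨w, hwne, hAk3⟩ := hextract k3 hk3 hc3
      obtain ⟨u, hu⟩ := Finset.card_eq_one.mp (hI k3 hk3 k hk hk3k)
      have huk : u ∈ A k3 ∧ u ∈ A k := Finset.mem_inter.mp (hu ▸ Finset.mem_singleton_self u)
      have hunc : u ≠ c := fun h => hcA (h ▸ huk.2)
      have huw : u = w := by
        have := huk.1
        rw [hAk3] at this
        rcases Finset.mem_insert.mp this with h | h
        · exact absurd h hunc
        · exact Finset.mem_singleton.mp h
      have hwmem : w ∈ A k := huw ▸ huk.2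
      rw [hAk] at hwmem
      rcases Finset.mem_insert.mp hwmem with rfl | hw1
      · -- A k3 = A k0
        have heq : A k3 = A k0 := by rw [hAk3, hAk0]
        have h1' := hI k3 hk3 k0 hk0 hk30
        rw [heq, Finset.inter_self, (hA k0 hk0).2] at h1'
        norm_num at h1'
      · have : w = b1 := Finset.mem_singleton.mp hw1
        subst this
        have heq : A k3 = A k1 := by rw [hAk3, hAk1]
        have h1' := hI k3 hk3 k1 hk1 hk31
        rw [heq, Finset.inter_self, (hA k1 hk1).2] at h1'
        norm_num at h1'
    · have hAk3 : A k3 = {b0, b1} := key k3 hk3 hk30 hk31 hc3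
      have heq : A k3 = A k := by rw [hAk3, hAk]
      have h1' := hI k3 hk3 k hk hk3k
      rw [heq, Finset.inter_self, (hA k hk).2] at h1'
      norm_num at h1'
  -- pigeonhole
  have hcU : c ∈ U := (hA k0 hk0).1 hck0
  have hinj : Set.InjOn (fun k => (A k).erase c) S := by
    intro k hk l hl he
    by_contra hne
    have h1' := hI k hk l hl hne
    have heq : A k = A l := by
      have hk' : A k = insert c ((A k).erase c) := (Finset.insert_erase (hall k hk)).symm
      rw [hk']
      simp only at he
      rw [he, Finset.insert_erase (hall l hl)]
    rw [heq, Finset.inter_self, (hA l hl).2] at h1'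
    norm_num at h1'
  have hmaps : ∀ k ∈ S, (A k).erase c ∈ (U.erase c).powersetCard 1 := by
    intro k hk
    rw [Finset.mem_powersetCard]
    constructor
    · intro t ht
      obtain ⟨htc, htA⟩ := Finset.mem_erase.mp ht
      exact Finset.mem_erase.mpr ⟨htc, (hA k hk).1 htA⟩
    · rw [Finset.card_erase_of_mem (hall k hk), (hA k hk).2]
  have hle := Finset.card_le_card_of_injOn _ hmaps hinj
  rw [hS, Finset.card_powersetCard, Finset.card_erase_of_mem hcU, hU] at hle
  norm_num at hle

section Aut
variable {B : Fin 36 → Finset (Fin 36)} {φ ψ : Equiv.Perm (Fin 36)}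

lemma mem_psi (hψB : ∀ i, B (ψ i) = (B i).image φ) (hinv : ∀ x, φ (φ x) = x)
    (x j : Fin 36) : x ∈ B (ψ j) ↔ φ x ∈ B j := by
  rw [hψB j]
  simp only [Finset.mem_image]
  constructor
  · rintro ⟨z, hz, rfl⟩
    rwa [hinv]
  · intro h
    exact ⟨φ x, h, hinv x⟩

lemma Hm_psi (hψB : ∀ i, B (ψ i) = (B i).image φ) (hinv : ∀ x, φ (φ x) = x)
    (x j : Fin 36) : Hm B x (ψ j) = Hm B (φ x) j := by
  simp only [Hm, Matrix.of_apply]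
  rw [if_congr (mem_psi hψB hinv x j) rfl rfl]

lemma psi_invol (hB : IsDesign B) (hψB : ∀ i, B (ψ i) = (B i).image φ)
    (hinv : ∀ x, φ (φ x) = x) (j : Fin 36) : ψ (ψ j) = j := by
  by_contra hne
  have h0 := coldot hB (show ψ (ψ j) ≠ j from hne)
  have hcols : ∀ x : Fin 36, Hm B x (ψ (ψ j)) = Hm B x j := by
    intro x
    rw [Hm_psi hψB hinv, Hm_psi hψB hinv, hinv]
  rw [Finset.sum_congr rfl fun x _ => by rw [hcols x]] at h0
  rw [colself] at h0
  norm_num at h0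

lemma psi_fix_card (hB : IsDesign B) (hψB : ∀ i, B (ψ i) = (B i).image φ)
    (hinv : ∀ x, φ (φ x) = x)
    (hfix : (Finset.univ.filter fun x => φ x = x).card = 14) :
    (Finset.univ.filter fun j => ψ j = j).card = 14 := by
  classical
  have hcolsum : ∀ i, ∑ x, Hm B x i * Hm B x (ψ i) = if ψ i = i then (36:ℚ) else 0 := by
    intro i
    by_cases h : ψ i = i
    · rw [if_pos h, h]
      exact colself i
    · rw [if_neg h]
      exact coldot hB (fun e => h e.symm)
  have hrowsum : ∀ x, ∑ i, Hm B x i * Hm B x (ψ i) = if φ x = x then (36:ℚ) else 0 := by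
    intro x
    rw [Finset.sum_congr rfl fun i _ => by rw [Hm_psi hψB hinv x i]]
    by_cases h : φ x = x
    · rw [if_pos h, h]
      exact rowself x
    · rw [if_neg h]
      exact rowdot hB (fun e => h e.symm)
  have hdouble : ∑ i, ∑ x : Fin 36, Hm B x i * Hm B x (ψ i)
      = ∑ x, ∑ i : Fin 36, Hm B x i * Hm B x (ψ i) := Finset.sum_comm
  rw [Finset.sum_congr rfl fun i _ => hcolsum i,
      Finset.sum_congr rfl fun x _ => hrowsum x] at hdouble
  have hL : ∑ i : Fin 36, (if ψ i = i then (36:ℚ) else 0)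
      = 36 * ((Finset.univ.filter fun j => ψ j = j).card : ℚ) := by
    simp only [show ∀ p : Prop, ∀ _ : Decidable p, (if p then (36:ℚ) else 0) = 36 * (if p then 1 else 0) from fun p _ => by split_ifs <;> norm_num]
    rw [← Finset.mul_sum, Finset.sum_boole]
  have hR : ∑ x : Fin 36, (if φ x = x then (36:ℚ) else 0)
      = 36 * ((Finset.univ.filter fun x => φ x = x).card : ℚ) := by
    simp only [show ∀ p : Prop, ∀ _ : Decidable p, (if p then (36:ℚ) else 0) = 36 * (if p then 1 else 0) from fun p _ => by split_ifs <;> norm_num]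
    rw [← Finset.mul_sum, Finset.sum_boole]
  rw [hL, hR, hfix] at hdouble
  have : ((Finset.univ.filter fun j => ψ j = j).card : ℚ) = 14 := by
    push_cast at hdouble
    linarith
  exact_mod_cast this

end Aut

def Zset (B : Fin 36 → Finset (Fin 36)) (ψ : Equiv.Perm (Fin 36)) (x : Fin 36) :
    Finset (Fin 36) :=
  Finset.univ.filter fun j => ((x ∈ B j) ↔ (x ∈ B (ψ j))) ∧ ψ j ≠ j

section Ag
variable {B : Fin 36 → Finset (Fin 36)} {φ ψ : Equiv.Perm (Fin 36)}

lemma agree_card (hB : IsDesign B) (hψB : ∀ i, B (ψ i) = (B i).image φ)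
    (hinv : ∀ x, φ (φ x) = x) {x : Fin 36} (hx : φ x ≠ x) :
    (Finset.univ.filter fun j => ((x ∈ B j) ↔ (x ∈ B (ψ j)))).card = 18 := by
  classical
  have h0 : ∑ j, Hm B x j * Hm B x (ψ j) = 0 := by
    rw [Finset.sum_congr rfl fun j _ => by rw [Hm_psi hψB hinv x j]]
    exact rowdot hB (fun e => hx e.symm)
  have hpt : ∀ j, Hm B x j * Hm B x (ψ j)
      = 2 * (if ((x ∈ B j) ↔ (x ∈ B (ψ j))) then (1:ℚ) else 0) - 1 := by
    intro j
    simp only [Hm, Matrix.of_apply]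
    by_cases h1 : x ∈ B j <;> by_cases h2 : x ∈ B (ψ j) <;> simp [h1, h2] <;> norm_num
  rw [Finset.sum_congr rfl fun j _ => hpt j, Finset.sum_sub_distrib,
      ← Finset.mul_sum, Finset.sum_boole, Finset.sum_const] at h0
  have : ((Finset.univ.filter fun j => ((x ∈ B j) ↔ (x ∈ B (ψ j)))).card : ℚ) = 18 := by
    simp only [Finset.card_univ, Fintype.card_fin, nsmul_eq_mul, mul_one] at h0
    push_cast at h0
    linarith
  exact_mod_cast this

lemma Z_card (hB : IsDesign B) (hψB : ∀ i, B (ψ i) = (B i).image φ)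
    (hinv : ∀ x, φ (φ x) = x)
    (hfix : (Finset.univ.filter fun x => φ x = x).card = 14)
    {x : Fin 36} (hx : φ x ≠ x) : (Zset B ψ x).card = 4 := by
  classical
  have h18 := agree_card hB hψB hinv hx
  have hsplit := Finset.card_filter_add_card_filter_not
    (s := Finset.univ.filter fun j => ((x ∈ B j) ↔ (x ∈ B (ψ j)))) (p := fun j => ψ j = j)
  rw [Finset.filter_filter, Finset.filter_filter, h18] at hsplit
  have h1 : (Finset.univ.filter fun j => ((x ∈ B j) ↔ (x ∈ B (ψ j))) ∧ ψ j = j)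
      = Finset.univ.filter fun j => ψ j = j := by
    ext j
    simp only [Finset.mem_filter, Finset.mem_univ, true_and]
    constructor
    · exact fun h => h.2
    · intro h
      exact ⟨by rw [h], h⟩
  have h2 : (Finset.univ.filter fun j => ((x ∈ B j) ↔ (x ∈ B (ψ j))) ∧ ¬ ψ j = j)
      = Zset B ψ x := rfl
  rw [h1, h2, psi_fix_card hB hψB hinv hfix] at hsplit
  omega

lemma Z_inv (hB : IsDesign B) (hψB : ∀ i, B (ψ i) = (B i).image φ)
    (hinv : ∀ x, φ (φ x) = x) {x j : Fin 36} (hj : j ∈ Zset B ψ x) :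
    ψ j ∈ Zset B ψ x := by
  simp only [Zset, Finset.mem_filter, Finset.mem_univ, true_and] at hj ⊢
  obtain ⟨hag, hne⟩ := hj
  constructor
  · rw [psi_invol hB hψB hinv j]
    exact ⟨hag.2, hag.1⟩
  · intro h
    have h2 := psi_invol hB hψB hinv j
    rw [h] at h2
    exact hne h2

lemma agree_phi (hψB : ∀ i, B (ψ i) = (B i).image φ) (hinv : ∀ x, φ (φ x) = x)
    (x j : Fin 36) :
    ((φ x ∈ B j) ↔ (φ x ∈ B (ψ j))) ↔ ((x ∈ B j) ↔ (x ∈ B (ψ j))) := by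
  have h1 : φ x ∈ B j ↔ x ∈ B (ψ j) := (mem_psi hψB hinv x j).symm
  have h2 : φ x ∈ B (ψ j) ↔ x ∈ B j := by
    rw [mem_psi hψB hinv (φ x) j, hinv]
  rw [h1, h2]
  exact ⟨Iff.symm, Iff.symm⟩

lemma Z_phi (hψB : ∀ i, B (ψ i) = (B i).image φ) (hinv : ∀ x, φ (φ x) = x)
    (x : Fin 36) : Zset B ψ (φ x) = Zset B ψ x := by
  ext j
  simp only [Zset, Finset.mem_filter, Finset.mem_univ, true_and]
  rw [agree_phi hψB hinv x j]

end Ag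

section ZZ
variable {B : Fin 36 → Finset (Fin 36)} {φ ψ : Equiv.Perm (Fin 36)}

lemma ZZ_card (hB : IsDesign B) (hψB : ∀ i, B (ψ i) = (B i).image φ)
    (hinv : ∀ x, φ (φ x) = x)
    (hfix : (Finset.univ.filter fun x => φ x = x).card = 14)
    {x y : Fin 36} (hx : φ x ≠ x) (hy : φ y ≠ y) (hyx : y ≠ x) (hyphix : y ≠ φ x) :
    (Zset B ψ x ∩ Zset B ψ y).card = 2 := by
  classical
  have hψinv : ∀ j, ψ (ψ j) = j := psi_invol hB hψB hinv
  set q : Fin 36 → ℚ := fun j =>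
    (Hm B x j - Hm B x (ψ j)) * (Hm B y j - Hm B y (ψ j)) with hq
  -- (1) sum of q is zero
  have hx_ne_phiy : x ≠ φ y := by
    intro h
    exact hyphix (by rw [h, hinv])
  have hphix_ne_phiy : φ x ≠ φ y := by
    intro h
    have := congrArg φ h
    rw [hinv, hinv] at this
    exact hyx (this.symm)
  have hqsum : ∑ j, q j = 0 := by
    have hpt : ∀ j, q j = Hm B x j * Hm B y j - Hm B x j * Hm B (φ y) j
        - Hm B (φ x) j * Hm B y j + Hm B (φ x) j * Hm B (φ y) j := by
      intro j
      rw [hq]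
      simp only
      rw [Hm_psi hψB hinv x j, Hm_psi hψB hinv y j]
      ring
    rw [Finset.sum_congr rfl fun j _ => hpt j, Finset.sum_add_distrib,
        Finset.sum_sub_distrib, Finset.sum_sub_distrib,
        rowdot hB (Ne.symm hyx), rowdot hB hx_ne_phiy,
        rowdot hB (Ne.symm hyphix), rowdot hB hphix_ne_phiy]
    norm_num
  -- (2) possible values of q
  have hqval : ∀ j, q j = 0 ∨ q j = 4 ∨ q j = -4 := by
    intro j
    rw [hq]
    simp only [Hm, Matrix.of_apply]
    split_ifs <;> norm_num
  -- (3) q is ψ-invariant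
  have hqpsi : ∀ j, q (ψ j) = q j := by
    intro j
    rw [hq]
    simp only [hψinv j]
    ring
  -- (4) positive and negative parts
  set P : Finset (Fin 36) := Finset.univ.filter fun j => q j = 4 with hP
  set Nn : Finset (Fin 36) := Finset.univ.filter fun j => q j = -4 with hN
  have hPN : (P.card : ℚ) = Nn.card := by
    have hpt : ∀ j, q j = (if q j = 4 then (4:ℚ) else 0) + (if q j = -4 then (-4:ℚ) else 0) := by
      intro j
      rcases hqval j with h | h | h <;> rw [h] <;> norm_num
    rw [Finset.sum_congr rfl fun j _ => hpt j, Finset.sum_add_distrib] at hqsum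
    have e1 : ∑ j, (if q j = 4 then (4:ℚ) else 0) = 4 * P.card := by
      simp only [show ∀ p : Prop, ∀ _ : Decidable p, (if p then (4:ℚ) else 0) = 4 * (if p then 1 else 0) from fun p _ => by split_ifs <;> norm_num]
      rw [← Finset.mul_sum, Finset.sum_boole, hP]
    have e2 : ∑ j, (if q j = -4 then (-4:ℚ) else 0) = -4 * Nn.card := by
      simp only [show ∀ p : Prop, ∀ _ : Decidable p, (if p then (-4:ℚ) else 0) = -4 * (if p then 1 else 0) from fun p _ => by split_ifs <;> norm_num]
      rw [← Finset.mul_sum, Finset.sum_boole, hN]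
    rw [e1, e2] at hqsum
    linarith
  have hPNnat : P.card = Nn.card := by exact_mod_cast hPN
  -- (5) P has even cardinality
  have hnofix : ∀ j, ψ j = j → q j = 0 := by
    intro j h
    rw [hq]
    simp only [h]
    ring
  have hPeven : ∃ m, P.card = 2 * m := by
    refine ⟨_, pair_card ψ hψinv P ?_ ?_⟩
    · intro j hj
      rw [hP, Finset.mem_filter] at hj
      intro h
      rw [hnofix j h] at hj
      norm_num at hj
    · intro j hj
      rw [hP, Finset.mem_filter] at hj ⊢
      exact ⟨Finset.mem_univ _, by rw [hqpsi j]; exact hj.2⟩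
  -- (6) cardinality of the zero set of q
  have hdisj : Disjoint P Nn := by
    rw [Finset.disjoint_filter]
    intro j _ h4 hm4
    rw [h4] at hm4
    norm_num at hm4
  have hunion : Finset.univ.filter (fun j => ¬ q j = 0) = P ∪ Nn := by
    ext j
    simp only [hP, hN, Finset.mem_filter, Finset.mem_union, Finset.mem_univ, true_and]
    rcases hqval j with h | h | h <;> rw [h] <;> norm_num
  have hzcard : (Finset.univ.filter fun j => q j = 0).card = 36 - 2 * P.card := by
    have hsplit := Finset.card_filter_add_card_filter_not
      (s := (Finset.univ : Finset (Fin 36))) (p := fun j => q j = 0)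
    rw [hunion, Finset.card_union_of_disjoint hdisj, ← hPNnat] at hsplit
    simp only [Finset.card_univ, Fintype.card_fin] at hsplit
    omega
  -- (7) zero set = union of the two agreement sets
  have hd0 : ∀ z j, (Hm B z j - Hm B z (ψ j) = 0) ↔ ((z ∈ B j) ↔ (z ∈ B (ψ j))) := by
    intro z j
    simp only [Hm, Matrix.of_apply]
    by_cases h1 : z ∈ B j <;> by_cases h2 : z ∈ B (ψ j) <;> simp [h1, h2] <;> norm_num
  have hzeq : Finset.univ.filter (fun j => q j = 0)
      = (Finset.univ.filter fun j => ((x ∈ B j) ↔ (x ∈ B (ψ j))))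
        ∪ (Finset.univ.filter fun j => ((y ∈ B j) ↔ (y ∈ B (ψ j)))) := by
    ext j
    simp only [Finset.mem_filter, Finset.mem_union, Finset.mem_univ, true_and, hq]
    rw [mul_eq_zero, hd0 x j, hd0 y j]
  -- (8) count the intersection of the agreement sets
  set Ax := Finset.univ.filter fun j => ((x ∈ B j) ↔ (x ∈ B (ψ j))) with hAx
  set Ay := Finset.univ.filter fun j => ((y ∈ B j) ↔ (y ∈ B (ψ j))) with hAy
  have hinterAB : (Ax ∩ Ay).card = 2 * P.card := by
    have hcu := Finset.card_union_add_card_inter Ax Ay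
    rw [← hzeq, hzcard, agree_card hB hψB hinv hx, agree_card hB hψB hinv hy] at hcu
    have hple : 2 * P.card ≤ 36 := by
      have := Finset.card_filter_le Finset.univ (fun j => ¬ q j = 0)
      rw [hunion, Finset.card_union_of_disjoint hdisj, ← hPNnat] at this
      simp only [Finset.card_univ, Fintype.card_fin] at this
      omega
    omega
  -- (9) split intersection into fixed and non-fixed parts
  have hsplit2 := Finset.card_filter_add_card_filter_not
    (s := Ax ∩ Ay) (p := fun j => ψ j = j)
  have hfixsub : (Ax ∩ Ay).filter (fun j => ψ j = j)
      = Finset.univ.filter fun j => ψ j = j := by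
    ext j
    simp only [Finset.mem_filter, Finset.mem_inter, hAx, hAy, Finset.mem_univ, true_and]
    constructor
    · tauto
    · intro h
      have hax : x ∈ B j ↔ x ∈ B (ψ j) := by rw [h]
      have hay : y ∈ B j ↔ y ∈ B (ψ j) := by rw [h]
      tauto
  have hZZeq : (Ax ∩ Ay).filter (fun j => ¬ ψ j = j) = Zset B ψ x ∩ Zset B ψ y := by
    ext j
    simp only [Finset.mem_filter, Finset.mem_inter, hAx, hAy, Zset, Finset.mem_univ, true_and]
    tauto
  rw [hfixsub, hZZeq, hinterAB, psi_fix_card hB hψB hinv hfix] at hsplit2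
  have hZxle : (Zset B ψ x ∩ Zset B ψ y).card ≤ 4 := by
    have := Finset.card_le_card (Finset.inter_subset_left (s₁ := Zset B ψ x) (s₂ := Zset B ψ y))
    rw [Z_card hB hψB hinv hfix hx] at this
    exact this
  obtain ⟨m, hm⟩ := hPeven
  omega
end ZZ

theorem no_design_with_involution_fixing_14 :
    ¬ ∃ B : Fin 36 → Finset (Fin 36), IsDesign B ∧ HasOrder2AutWithFixed B 14 := by
  classical
  rintro ⟨B, hB, φ, ψ, hψB, hφ2, -, hfix⟩
  have hinv : ∀ x, φ (φ x) = x := fun x => congrFun hφ2 x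
  have hψinv : ∀ j, ψ (ψ j) = j := psi_invol hB hψB hinv
  -- the 22 non-fixed points and their 11 orbit pairs
  set NFp : Finset (Fin 36) := Finset.univ.filter (fun x => ¬ φ x = x) with hNFp
  have hNFpcard : NFp.card = 22 := by
    have h := Finset.card_filter_add_card_filter_not
      (s := (Finset.univ : Finset (Fin 36))) (p := fun x => φ x = x)
    rw [hfix, show (Finset.univ.filter (fun x => ¬ φ x = x)) = NFp from rfl] at h
    simp only [Finset.card_univ, Fintype.card_fin] at h
    omega
  set S : Finset (Finset (Fin 36)) := NFp.image (fun x => ({x, φ x} : Finset (Fin 36))) with hS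
  have hScard : S.card = 11 := by
    have hpc := pair_card (fun x => φ x) hinv NFp
      (fun x hx => by rw [hNFp, Finset.mem_filter] at hx; exact hx.2)
      (fun x hx => by
        rw [hNFp, Finset.mem_filter] at hx ⊢
        refine ⟨Finset.mem_univ _, fun h => hx.2 ?_⟩
        rw [hinv] at h
        exact h.symm)
    rw [hNFpcard, show NFp.image (fun x => ({x, φ x} : Finset (Fin 36))) = S from rfl] at hpc
    omega
  -- the 22 non-fixed blocks and their 11 orbit pairs
  set NFb : Finset (Fin 36) := Finset.univ.filter (fun j => ¬ ψ j = j) with hNFb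
  have hNFbcard : NFb.card = 22 := by
    have h := Finset.card_filter_add_card_filter_not
      (s := (Finset.univ : Finset (Fin 36))) (p := fun j => ψ j = j)
    rw [psi_fix_card hB hψB hinv hfix,
      show (Finset.univ.filter (fun j => ¬ ψ j = j)) = NFb from rfl] at h
    simp only [Finset.card_univ, Fintype.card_fin] at h
    omega
  set pr : Fin 36 → Finset (Fin 36) := fun j => ({j, ψ j} : Finset (Fin 36)) with hpr
  set U : Finset (Finset (Fin 36)) := NFb.image pr with hU
  have hUcard : U.card = 11 := by
    have hpc := pair_card (fun j => ψ j) hψinv NFb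
      (fun j hj => by rw [hNFb, Finset.mem_filter] at hj; exact hj.2)
      (fun j hj => by
        rw [hNFb, Finset.mem_filter] at hj ⊢
        refine ⟨Finset.mem_univ _, fun h => hj.2 ?_⟩
        rw [hψinv] at h
        exact h.symm)
    rw [hNFbcard, show NFb.image (fun j => ({j, ψ j} : Finset (Fin 36))) = U from rfl] at hpc
    omega
  -- image of a ψ-invariant set of non-fixed blocks halves cardinality
  have himgcard : ∀ W : Finset (Fin 36), (∀ j ∈ W, ψ j ≠ j) → (∀ j ∈ W, ψ j ∈ W) →
      W.card = 2 * (W.image pr).card := fun W h1 h2 => pair_card (fun j => ψ j) hψinv W h1 h2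
  -- the family of agreement-pair sets
  set A : Finset (Fin 36) → Finset (Finset (Fin 36)) :=
    fun a => (a.biUnion (fun x => Zset B ψ x)).image pr with hA
  have hAval : ∀ x : Fin 36, A ({x, φ x} : Finset (Fin 36)) = (Zset B ψ x).image pr := by
    intro x
    rw [hA]
    congr 1
    simp only [Finset.biUnion_insert, Finset.singleton_biUnion]
    rw [Z_phi hψB hinv, Finset.union_self]
  -- properties of Zset needed below
  have hZnf : ∀ x, ∀ j ∈ Zset B ψ x, ψ j ≠ j := by
    intro x j hj
    rw [Zset, Finset.mem_filter] at hj
    exact hj.2.2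
  have hZsub : ∀ x, Zset B ψ x ⊆ NFb := by
    intro x j hj
    rw [hNFb, Finset.mem_filter]
    exact ⟨Finset.mem_univ _, hZnf x j hj⟩
  -- apply the sunflower lemma
  refine sunflower11 S U A hScard hUcard ?_ ?_
  · rintro a ha
    rw [hS, Finset.mem_image] at ha
    obtain ⟨x, hx, rfl⟩ := ha
    rw [hNFp, Finset.mem_filter] at hx
    rw [hAval x]
    constructor
    · exact Finset.image_subset_image (hZsub x) |>.trans (by rw [hU])
    · have := himgcard (Zset B ψ x) (hZnf x) (fun j hj => Z_inv hB hψB hinv hj)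
      rw [Z_card hB hψB hinv hfix hx.2] at this
      omega
  · rintro a ha b hb hab
    rw [hS, Finset.mem_image] at ha hb
    obtain ⟨x, hx, rfl⟩ := ha
    obtain ⟨y, hy, rfl⟩ := hb
    rw [hNFp, Finset.mem_filter] at hx hy
    have hyx : y ≠ x := by
      rintro rfl
      exact hab rfl
    have hyphix : y ≠ φ x := by
      rintro rfl
      exact hab (by rw [hinv, Finset.pair_comm])
    rw [hAval x, hAval y]
    have hinter : ((Zset B ψ x).image pr) ∩ ((Zset B ψ y).image pr)
        = (Zset B ψ x ∩ Zset B ψ y).image pr := by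
      apply Finset.Subset.antisymm
      · intro t ht
        rw [Finset.mem_inter] at ht
        obtain ⟨j, hj, rfl⟩ := Finset.mem_image.mp ht.1
        obtain ⟨l, hl, hlj⟩ := Finset.mem_image.mp ht.2
        have hjl : j ∈ Zset B ψ y := by
          have hjin : j ∈ pr l := by
            rw [hlj, hpr]
            exact Finset.mem_insert_self _ _
          rw [hpr] at hjin
          rcases Finset.mem_insert.mp hjin with rfl | hjin
          · exact hl
          · rw [Finset.mem_singleton] at hjin
            subst hjin
            exact Z_inv hB hψB hinv hl
        exact Finset.mem_image.mpr ⟨j, Finset.mem_inter.mpr ⟨hj, hjl⟩, rfl⟩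
      · intro t ht
        obtain ⟨j, hj, rfl⟩ := Finset.mem_image.mp ht
        rw [Finset.mem_inter] at hj
        exact Finset.mem_inter.mpr
          ⟨Finset.mem_image.mpr ⟨j, hj.1, rfl⟩, Finset.mem_image.mpr ⟨j, hj.2, rfl⟩⟩
    rw [hinter]
    have hWinv : ∀ j ∈ Zset B ψ x ∩ Zset B ψ y, ψ j ∈ Zset B ψ x ∩ Zset B ψ y := by
      intro j hj
      rw [Finset.mem_inter] at hj ⊢
      exact ⟨Z_inv hB hψB hinv hj.1, Z_inv hB hψB hinv hj.2⟩
    have hWnf : ∀ j ∈ Zset B ψ x ∩ Zset B ψ y, ψ j ≠ j :=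
      fun j hj => hZnf x j (Finset.mem_inter.mp hj).1
    have := himgcard (Zset B ψ x ∩ Zset B ψ y) hWnf hWinv
    rw [ZZ_card hB hψB hinv hfix hx.2 hy.2 hyx hyphix] at this
    omega
end

section
/- There is no symmetric 2-(36,15,6) design admitting an automorphism of order two that fixes exactly 18 points. -/
open Finset
set_option maxRecDepth 8000
set_option maxHeartbeats 2000000

lemma swap_count {α β : Type*} [Fintype α] [Fintype β] (P : α → β → Prop)
    [∀ i x, Decidable (P i x)] :
    ∑ i, (Finset.univ.filter fun x => P i x).card
      = ∑ x, (Finset.univ.filter fun i => P i x).card := by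
  simp only [Finset.card_filter]
  exact Finset.sum_comm

lemma nat_le_mul_self (m : ℕ) : m ≤ m * m := by
  cases m with
  | zero => simp
  | succ n => exact Nat.le_mul_of_pos_left _ (Nat.succ_pos n)

lemma filter_mem_and {α : Type*} [Fintype α] [DecidableEq α] (s : Finset α) (q : α → Prop)
    [DecidablePred q] :
    Finset.univ.filter (fun x => x ∈ s ∧ q x) = s.filter q := by
  ext x; simp

lemma split_card {α : Type*} [Fintype α] (p q : α → Prop)
    [DecidablePred p] [DecidablePred q] :
    (Finset.univ.filter fun i => q i ∧ p i).card
      + (Finset.univ.filter fun i => ¬ q i ∧ p i).card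
      = (Finset.univ.filter p).card := by
  have h := Finset.card_filter_add_card_filter_not
    (s := Finset.univ.filter p) (p := q)
  rw [Finset.filter_filter, Finset.filter_filter] at h
  rw [show (Finset.univ.filter fun i => q i ∧ p i)
      = Finset.univ.filter fun i => p i ∧ q i by ext i; simp [and_comm]]
  rw [show (Finset.univ.filter fun i => ¬ q i ∧ p i)
      = Finset.univ.filter fun i => p i ∧ ¬ q i by ext i; simp [and_comm]]
  exact h

lemma repl (B : Fin 36 → Finset (Fin 36)) (hcard : ∀ i, (B i).card = 15)
    (hlam : ∀ x y : Fin 36, x ≠ y →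
      (Finset.univ.filter fun i => x ∈ B i ∧ y ∈ B i).card = 6) (x : Fin 36) :
    (Finset.univ.filter fun i => x ∈ B i).card = 15 := by
  have key := swap_count (fun i y => x ∈ B i ∧ y ∈ B i ∧ y ≠ x)
  have hL : ∀ i, (Finset.univ.filter fun y => x ∈ B i ∧ y ∈ B i ∧ y ≠ x).card
      = if x ∈ B i then 14 else 0 := by
    intro i
    by_cases hx : x ∈ B i
    · rw [if_pos hx]
      have he : (Finset.univ.filter fun y => x ∈ B i ∧ y ∈ B i ∧ y ≠ x) = (B i).erase x := by
        ext y; simp [hx, Finset.mem_erase, and_comm]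
      rw [he, Finset.card_erase_of_mem hx, hcard]
    · simp [hx]
  have hR : ∀ y : Fin 36, (Finset.univ.filter fun i => x ∈ B i ∧ y ∈ B i ∧ y ≠ x).card
      = if y = x then 0 else 6 := by
    intro y
    by_cases hy : y = x
    · simp [hy]
    · rw [if_neg hy]
      have : (Finset.univ.filter fun i => x ∈ B i ∧ y ∈ B i ∧ y ≠ x)
          = (Finset.univ.filter fun i => x ∈ B i ∧ y ∈ B i) := by
        ext i; simp [hy]
      rw [this]; exact hlam x y (Ne.symm hy)
  rw [Finset.sum_congr rfl (fun i _ => hL i), Finset.sum_congr rfl (fun y _ => hR y)] at key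
  rw [← Finset.sum_filter, Finset.sum_const, smul_eq_mul] at key
  have h210 : (∑ y : Fin 36, if y = x then 0 else 6) = 210 := by
    rw [← Finset.add_sum_erase _ _ (Finset.mem_univ x), if_pos rfl,
      Finset.sum_congr rfl (fun y hy => if_neg (Finset.ne_of_mem_erase hy))]
    simp
  rw [h210] at key
  omega

lemma dual_lam (B : Fin 36 → Finset (Fin 36)) (hcard : ∀ i, (B i).card = 15)
    (hlam : ∀ x y : Fin 36, x ≠ y →
      (Finset.univ.filter fun i => x ∈ B i ∧ y ∈ B i).card = 6)
    (hrep : ∀ x, (Finset.univ.filter fun i => x ∈ B i).card = 15)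
    {i j : Fin 36} (hij : j ≠ i) : (B i ∩ B j).card = 6 := by
  have keyA := swap_count (fun l (x : Fin 36) => x ∈ B i ∧ x ∈ B l)
  have hA : ∑ l, (B i ∩ B l).card = 225 := by
    have hL : ∀ l, (Finset.univ.filter fun x => x ∈ B i ∧ x ∈ B l) = B i ∩ B l := by
      intro l; ext x; simp [Finset.mem_inter]
    have hR : ∀ x : Fin 36, (Finset.univ.filter fun l => x ∈ B i ∧ x ∈ B l).card
        = if x ∈ B i then 15 else 0 := by
      intro x
      by_cases hx : x ∈ B i
      · rw [if_pos hx]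
        have : (Finset.univ.filter fun l => x ∈ B i ∧ x ∈ B l)
            = (Finset.univ.filter fun l => x ∈ B l) := by ext l; simp [hx]
        rw [this]; exact hrep x
      · simp [hx]
    calc ∑ l, (B i ∩ B l).card
        = ∑ l, (Finset.univ.filter fun x => x ∈ B i ∧ x ∈ B l).card := by
          simp only [hL]
      _ = ∑ x, (Finset.univ.filter fun l => x ∈ B i ∧ x ∈ B l).card := keyA
      _ = ∑ x : Fin 36, if x ∈ B i then 15 else 0 := by
          exact Finset.sum_congr rfl (fun x _ => hR x)
      _ = 225 := by
          rw [← Finset.sum_filter, Finset.sum_const, smul_eq_mul]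
          have : (Finset.univ.filter fun x => x ∈ B i) = B i := by ext x; simp
          rw [this, hcard]
  have keyB := swap_count (fun l (p : Fin 36 × Fin 36) =>
    (p.1 ∈ B i ∧ p.2 ∈ B i ∧ p.1 ≠ p.2) ∧ p.1 ∈ B l ∧ p.2 ∈ B l)
  have hB : ∑ l, ((B i ∩ B l).card * (B i ∩ B l).card - (B i ∩ B l).card) = 1260 := by
    have hL : ∀ l, (Finset.univ.filter fun p : Fin 36 × Fin 36 =>
        (p.1 ∈ B i ∧ p.2 ∈ B i ∧ p.1 ≠ p.2) ∧ p.1 ∈ B l ∧ p.2 ∈ B l)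
        = (B i ∩ B l).offDiag := by
      intro l; ext p
      rw [Finset.mem_filter, Finset.mem_offDiag, Finset.mem_inter, Finset.mem_inter]
      simp only [Finset.mem_univ, true_and]
      exact ⟨fun h => ⟨⟨h.1.1, h.2.1⟩, ⟨h.1.2.1, h.2.2⟩, h.1.2.2⟩,
        fun h => ⟨⟨h.1.1, h.2.1.1, h.2.2⟩, h.1.2, h.2.1.2⟩⟩
    have hR : ∀ p : Fin 36 × Fin 36,
        (Finset.univ.filter fun l => (p.1 ∈ B i ∧ p.2 ∈ B i ∧ p.1 ≠ p.2)
          ∧ p.1 ∈ B l ∧ p.2 ∈ B l).card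
        = if p.1 ∈ B i ∧ p.2 ∈ B i ∧ p.1 ≠ p.2 then 6 else 0 := by
      intro p
      by_cases hp : p.1 ∈ B i ∧ p.2 ∈ B i ∧ p.1 ≠ p.2
      · rw [if_pos hp]
        have : (Finset.univ.filter fun l => (p.1 ∈ B i ∧ p.2 ∈ B i ∧ p.1 ≠ p.2)
            ∧ p.1 ∈ B l ∧ p.2 ∈ B l)
            = (Finset.univ.filter fun l => p.1 ∈ B l ∧ p.2 ∈ B l) := by
          ext l; simp [hp]
        rw [this]; exact hlam p.1 p.2 hp.2.2
      · simp [hp]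
    calc ∑ l, ((B i ∩ B l).card * (B i ∩ B l).card - (B i ∩ B l).card)
        = ∑ l, (Finset.univ.filter fun p : Fin 36 × Fin 36 =>
            (p.1 ∈ B i ∧ p.2 ∈ B i ∧ p.1 ≠ p.2) ∧ p.1 ∈ B l ∧ p.2 ∈ B l).card := by
          refine Finset.sum_congr rfl (fun l _ => ?_)
          rw [hL l, Finset.offDiag_card]
      _ = ∑ p : Fin 36 × Fin 36, (Finset.univ.filter fun l =>
            (p.1 ∈ B i ∧ p.2 ∈ B i ∧ p.1 ≠ p.2) ∧ p.1 ∈ B l ∧ p.2 ∈ B l).card := keyB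
      _ = ∑ p : Fin 36 × Fin 36, if p.1 ∈ B i ∧ p.2 ∈ B i ∧ p.1 ≠ p.2 then 6 else 0 := by
          exact Finset.sum_congr rfl (fun p _ => hR p)
      _ = 1260 := by
          rw [← Finset.sum_filter, Finset.sum_const, smul_eq_mul]
          have : (Finset.univ.filter fun p : Fin 36 × Fin 36 =>
              p.1 ∈ B i ∧ p.2 ∈ B i ∧ p.1 ≠ p.2) = (B i).offDiag := by
            ext p
            rw [Finset.mem_filter, Finset.mem_offDiag]
            simp only [Finset.mem_univ, true_and]
          rw [this, Finset.offDiag_card, hcard]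
  set m : Fin 36 → ℤ := fun l => ((B i ∩ B l).card : ℤ) with hm
  have hmi : m i = 15 := by simp [hm, Finset.inter_self, hcard]
  have hS1 : ∑ l, m l = 225 := by
    rw [hm]; rw [← Nat.cast_sum]; exact_mod_cast congrArg (Nat.cast : ℕ → ℤ) hA
  have hS2 : ∑ l, (m l * m l - m l) = 1260 := by
    have : ∀ l, m l * m l - m l
        = (((B i ∩ B l).card * (B i ∩ B l).card - (B i ∩ B l).card : ℕ) : ℤ) := by
      intro l
      rw [Nat.cast_sub (nat_le_mul_self _)]
      push_cast [hm]; ring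
    rw [Finset.sum_congr rfl (fun l _ => this l), ← Nat.cast_sum, hB]
    norm_num
  have hT : ∑ l ∈ Finset.univ.erase i, (m l - 6) ^ 2 = 0 := by
    have expand : ∀ l, (m l - 6) ^ 2 = (m l * m l - m l) - 11 * m l + 36 := by
      intro l; ring
    rw [Finset.sum_congr rfl (fun l _ => expand l)]
    rw [Finset.sum_add_distrib, Finset.sum_sub_distrib, ← Finset.mul_sum]
    rw [Finset.sum_erase_eq_sub (Finset.mem_univ i), Finset.sum_erase_eq_sub (Finset.mem_univ i)]
    rw [hS1, hS2, hmi, Finset.sum_const, Finset.card_erase_of_mem (Finset.mem_univ i)]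
    rw [Finset.card_univ, Fintype.card_fin]
    norm_num
  have hj : (m j - 6) ^ 2 = 0 := by
    have := (Finset.sum_eq_zero_iff_of_nonneg (fun l _ => sq_nonneg (m l - 6))).mp hT
    exact this j (Finset.mem_erase.mpr ⟨hij, Finset.mem_univ j⟩)
  have hmj : m j = 6 := by
    have := pow_eq_zero_iff (n := 2) (by norm_num) |>.mp hj
    linarith
  simp only [hm] at hmj
  exact_mod_cast hmj

lemma stage2 (B : Fin 36 → Finset (Fin 36)) (φ ψ : Equiv.Perm (Fin 36))
    (hcard : ∀ i, (B i).card = 15)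
    (hlam : ∀ x y : Fin 36, x ≠ y →
      (Finset.univ.filter fun i => x ∈ B i ∧ y ∈ B i).card = 6)
    (hrep : ∀ x, (Finset.univ.filter fun i => x ∈ B i).card = 15)
    (hinv : ∀ x, φ (φ x) = x)
    (hφne : ⇑φ ≠ (id : Fin 36 → Fin 36))
    (hσB : ∀ i x, x ∈ B (ψ i) ↔ φ x ∈ B i)
    (hmoved : (Finset.univ.filter fun x : Fin 36 => ¬ φ x = x).card = 18)
    (hFBcard : (Finset.univ.filter fun i : Fin 36 => ψ i = i).card = 18)
    (hc6 : ∀ i, ψ i ≠ i → (Finset.univ.filter fun x => x ∈ B i ∧ φ x ∈ B i).card = 6)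
    (hf9 : ∀ i, ψ i = i → (Finset.univ.filter fun x => x ∈ B i ∧ φ x = x).card = 9)
    (hf6 : ∀ i, ψ i ≠ i → (Finset.univ.filter fun x => x ∈ B i ∧ φ x = x).card = 6) :
    False := by
  -- step 9: in a non-fixed block, no moved point has its partner inside
  have hnb9 : ∀ i, ψ i ≠ i → ∀ x, x ∈ B i → φ x ∈ B i → φ x = x := by
    intro i hψ x hx hφx
    have hsub : (Finset.univ.filter fun x => x ∈ B i ∧ φ x = x)
        ⊆ (Finset.univ.filter fun x => x ∈ B i ∧ φ x ∈ B i) := by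
      intro z hz
      simp only [Finset.mem_filter, Finset.mem_univ, true_and] at hz ⊢
      exact ⟨hz.1, by rw [hz.2]; exact hz.1⟩
    have heq := Finset.eq_of_subset_of_card_le hsub
      (by rw [hc6 i hψ, hf6 i hψ])
    have : x ∈ (Finset.univ.filter fun x => x ∈ B i ∧ φ x = x) := by
      rw [heq]
      simp only [Finset.mem_filter, Finset.mem_univ, true_and]
      exact ⟨hx, hφx⟩
    simp only [Finset.mem_filter, Finset.mem_univ, true_and] at this
    exact this.2
  -- step 10: each moved point lies in exactly 6 fixed blocks
  have hBiset : ∀ i, (Finset.univ.filter fun x : Fin 36 => x ∈ B i) = B i := by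
    intro i; ext x; simp
  have hle : ∀ x, ¬ φ x = x →
      (Finset.univ.filter fun i => ψ i = i ∧ x ∈ B i).card ≤ 6 := by
    intro x hx
    have hsub : (Finset.univ.filter fun i => ψ i = i ∧ x ∈ B i)
        ⊆ (Finset.univ.filter fun i => x ∈ B i ∧ φ x ∈ B i) := by
      intro i hi
      simp only [Finset.mem_filter, Finset.mem_univ, true_and] at hi ⊢
      refine ⟨hi.2, (hσB i x).mp ?_⟩
      rw [hi.1]; exact hi.2
    calc (Finset.univ.filter fun i => ψ i = i ∧ x ∈ B i).card
        ≤ (Finset.univ.filter fun i => x ∈ B i ∧ φ x ∈ B i).card :=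
          Finset.card_le_card hsub
      _ = 6 := hlam x (φ x) (fun h => hx h.symm)
  have hmovedcount : ∀ i, ψ i = i →
      (Finset.univ.filter fun x => ¬ φ x = x ∧ x ∈ B i).card = 6 := by
    intro i hi
    have e2 : (Finset.univ.filter fun x => (φ x = x) ∧ x ∈ B i)
        = (Finset.univ.filter fun x => x ∈ B i ∧ φ x = x) := by
      ext x; simp [and_comm]
    have hs := split_card (fun x : Fin 36 => x ∈ B i) (fun x => φ x = x)
    rw [e2, hf9 i hi, hBiset, hcard] at hs
    omega
  have hsum : ∑ x ∈ Finset.univ.filter (fun x : Fin 36 => ¬ φ x = x),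
      (Finset.univ.filter fun i => ψ i = i ∧ x ∈ B i).card = 108 := by
    have key := swap_count (fun i (x : Fin 36) => ψ i = i ∧ x ∈ B i ∧ ¬ φ x = x)
    have hL : ∀ i, (Finset.univ.filter fun x => ψ i = i ∧ x ∈ B i ∧ ¬ φ x = x).card
        = if ψ i = i then 6 else 0 := by
      intro i
      by_cases hi : ψ i = i
      · rw [if_pos hi]
        have e1 : (Finset.univ.filter fun x => ψ i = i ∧ x ∈ B i ∧ ¬ φ x = x)
            = (Finset.univ.filter fun x => ¬ φ x = x ∧ x ∈ B i) := by
          ext x; simp only [Finset.mem_filter, Finset.mem_univ, true_and]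
          constructor
          · rintro ⟨_, h2, h3⟩; exact ⟨h3, h2⟩
          · rintro ⟨h3, h2⟩; exact ⟨hi, h2, h3⟩
        rw [e1]; exact hmovedcount i hi
      · simp [hi]
    have hR : ∀ x : Fin 36,
        (Finset.univ.filter fun i => ψ i = i ∧ x ∈ B i ∧ ¬ φ x = x).card
        = if ¬ φ x = x then (Finset.univ.filter fun i => ψ i = i ∧ x ∈ B i).card
          else 0 := by
      intro x
      by_cases hx : φ x = x
      · simp [hx]
      · rw [if_pos hx]
        have e : (Finset.univ.filter fun i => ψ i = i ∧ x ∈ B i ∧ ¬ φ x = x)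
            = (Finset.univ.filter fun i => ψ i = i ∧ x ∈ B i) := by
          ext i
          simp only [Finset.mem_filter, Finset.mem_univ, true_and]
          constructor
          · rintro ⟨h1, h2, _⟩; exact ⟨h1, h2⟩
          · rintro ⟨h1, h2⟩; exact ⟨h1, h2, hx⟩
        rw [e]
    rw [Finset.sum_congr rfl (fun i _ => hL i), Finset.sum_congr rfl (fun x _ => hR x),
      ← Finset.sum_filter, ← Finset.sum_filter, Finset.sum_const, smul_eq_mul, hFBcard] at key
    rw [← key]
  have ha6 : ∀ x, ¬ φ x = x → (Finset.univ.filter fun i => ψ i = i ∧ x ∈ B i).card = 6 := by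
    intro x hx
    by_contra hne
    have hlt : (Finset.univ.filter fun i => ψ i = i ∧ x ∈ B i).card < 6 :=
      lt_of_le_of_ne (hle x hx) hne
    have hlt2 : (∑ z ∈ Finset.univ.filter (fun z : Fin 36 => ¬ φ z = z),
        (Finset.univ.filter fun i => ψ i = i ∧ z ∈ B i).card)
        < ∑ _z ∈ Finset.univ.filter (fun z : Fin 36 => ¬ φ z = z), 6 :=
      Finset.sum_lt_sum (fun z hz => hle z (Finset.mem_filter.mp hz).2)
        ⟨x, Finset.mem_filter.mpr ⟨Finset.mem_univ x, hx⟩, hlt⟩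
    rw [Finset.sum_const, hmoved, smul_eq_mul, hsum] at hlt2
    omega
  -- number of non-fixed blocks through a moved point is 9
  have hnf9 : ∀ x, ¬ φ x = x →
      (Finset.univ.filter fun i => ¬ ψ i = i ∧ x ∈ B i).card = 9 := by
    intro x hx
    have hs := split_card (fun i : Fin 36 => x ∈ B i) (fun i => ψ i = i)
    rw [ha6 x hx, hrep] at hs
    omega
  -- pigeonhole: every non-fixed block contains z or φ z, for each moved z
  have hpig : ∀ i, ψ i ≠ i → ∀ z, ¬ φ z = z → z ∈ B i ∨ φ z ∈ B i := by
    intro i hψ z hz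
    have hMi : ((B i).filter fun x => ¬ φ x = x).card = 9 := by
      have e2 : ((B i).filter fun x => φ x = x)
          = (Finset.univ.filter fun x => x ∈ B i ∧ φ x = x) := by
        ext x; simp
      have hs := Finset.card_filter_add_card_filter_not
        (s := B i) (p := fun x => φ x = x)
      rw [hcard, e2, hf6 i hψ] at hs
      omega
    set Mi := (B i).filter (fun x => ¬ φ x = x) with hMidef
    set Im := Mi.image φ with hImdef
    have hIm : Im.card = 9 := by
      rw [hImdef, Finset.card_image_of_injective _ φ.injective, hMi]
    have hImnB : ∀ w ∈ Im, w ∉ B i := by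
      intro w hw
      rw [hImdef, Finset.mem_image] at hw
      obtain ⟨u, hu, rfl⟩ := hw
      rw [hMidef, Finset.mem_filter] at hu
      intro hφu
      exact hu.2 (hnb9 i hψ u hu.1 hφu)
    have hsub : Mi ∪ Im ⊆ Finset.univ.filter (fun x : Fin 36 => ¬ φ x = x) := by
      intro w hw
      rw [Finset.mem_union] at hw
      simp only [Finset.mem_filter, Finset.mem_univ, true_and]
      rcases hw with hw | hw
      · exact (Finset.mem_filter.mp hw).2
      · rw [hImdef, Finset.mem_image] at hw
        obtain ⟨u, hu, rfl⟩ := hw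
        rw [hMidef, Finset.mem_filter] at hu
        intro heq
        rw [hinv] at heq
        exact hu.2 heq.symm
    have hdisj : Disjoint Mi Im := by
      rw [Finset.disjoint_left]
      intro w hw hw'
      exact hImnB w hw' (Finset.mem_filter.mp hw).1
    have hcardU : (Mi ∪ Im).card = 18 := by
      rw [Finset.card_union_of_disjoint hdisj, hMi, hIm]
    have hequ : Mi ∪ Im = Finset.univ.filter (fun x : Fin 36 => ¬ φ x = x) :=
      Finset.eq_of_subset_of_card_le hsub (by rw [hmoved, hcardU])
    have hzmem : z ∈ Mi ∪ Im := by
      rw [hequ]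
      simp only [Finset.mem_filter, Finset.mem_univ, true_and]
      exact hz
    rw [Finset.mem_union] at hzmem
    rcases hzmem with hzm | hzm
    · exact Or.inl (Finset.mem_filter.mp hzm).1
    · right
      rw [hImdef, Finset.mem_image] at hzm
      obtain ⟨u, hu, rfl⟩ := hzm
      rw [hinv]
      exact (Finset.mem_filter.mp hu).1
  -- final counting contradiction
  obtain ⟨x0, hx0⟩ := Function.ne_iff.mp hφne
  have hx0' : ¬ φ x0 = x0 := hx0
  have hSne : ((Finset.univ.filter fun x : Fin 36 => ¬ φ x = x) \ {x0, φ x0}).Nonempty := by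
    rw [← Finset.card_pos]
    have h2 : ({x0, φ x0} : Finset (Fin 36)).card ≤ 2 := by
      apply le_trans (Finset.card_insert_le _ _)
      simp
    have := Finset.le_card_sdiff ({x0, φ x0} : Finset (Fin 36))
      (Finset.univ.filter fun x : Fin 36 => ¬ φ x = x)
    omega
  obtain ⟨y, hy⟩ := hSne
  rw [Finset.mem_sdiff] at hy
  have hymv : ¬ φ y = y := (Finset.mem_filter.mp hy.1).2
  have hyx0 : y ≠ x0 := fun h => hy.2 (by rw [h]; simp)
  have hyφx0 : y ≠ φ x0 := fun h => hy.2 (by rw [h]; simp)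
  have hx0y : x0 ≠ y := Ne.symm hyx0
  have hx0φy : x0 ≠ φ y := by
    intro h
    exact hyφx0 (by rw [h, hinv y])
  have hFBiff : ∀ i, ψ i = i → ∀ z : Fin 36, (z ∈ B i ↔ φ z ∈ B i) := by
    intro i hi z
    have := hσB i z
    rwa [hi] at this
  -- the two fixed-block counts agree
  have heqFB : (Finset.univ.filter fun i => ψ i = i ∧ x0 ∈ B i ∧ φ y ∈ B i)
      = (Finset.univ.filter fun i => ψ i = i ∧ x0 ∈ B i ∧ y ∈ B i) := by
    ext i
    simp only [Finset.mem_filter, Finset.mem_univ, true_and]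
    constructor
    · rintro ⟨h1, h2, h3⟩; exact ⟨h1, h2, (hFBiff i h1 y).mpr h3⟩
    · rintro ⟨h1, h2, h3⟩; exact ⟨h1, h2, (hFBiff i h1 y).mp h3⟩
  have hsplit1 := split_card (fun i : Fin 36 => x0 ∈ B i ∧ y ∈ B i) (fun i => ψ i = i)
  rw [hlam x0 y hx0y] at hsplit1
  have hsplit2 := split_card (fun i : Fin 36 => x0 ∈ B i ∧ φ y ∈ B i) (fun i => ψ i = i)
  rw [hlam x0 (φ y) hx0φy, heqFB] at hsplit2
  -- disjoint union of the two non-fixed-block sets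
  have hdisj : Disjoint (Finset.univ.filter fun i => ¬ ψ i = i ∧ x0 ∈ B i ∧ y ∈ B i)
      (Finset.univ.filter fun i => ¬ ψ i = i ∧ x0 ∈ B i ∧ φ y ∈ B i) := by
    rw [Finset.disjoint_left]
    intro i hi hi'
    simp only [Finset.mem_filter, Finset.mem_univ, true_and] at hi hi'
    exact hymv (hnb9 i hi.1 y hi.2.2 hi'.2.2)
  have hunion : (Finset.univ.filter fun i => ¬ ψ i = i ∧ x0 ∈ B i ∧ y ∈ B i)
      ∪ (Finset.univ.filter fun i => ¬ ψ i = i ∧ x0 ∈ B i ∧ φ y ∈ B i)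
      = (Finset.univ.filter fun i => ¬ ψ i = i ∧ x0 ∈ B i) := by
    ext i
    simp only [Finset.mem_union, Finset.mem_filter, Finset.mem_univ, true_and]
    constructor
    · rintro (⟨h1, h2, _⟩ | ⟨h1, h2, _⟩) <;> exact ⟨h1, h2⟩
    · rintro ⟨h1, h2⟩
      rcases hpig i h1 y hymv with hcase | hcase
      · exact Or.inl ⟨h1, h2, hcase⟩
      · exact Or.inr ⟨h1, h2, hcase⟩
  have hcardsum : (Finset.univ.filter fun i => ¬ ψ i = i ∧ x0 ∈ B i ∧ y ∈ B i).card
      + (Finset.univ.filter fun i => ¬ ψ i = i ∧ x0 ∈ B i ∧ φ y ∈ B i).card = 9 := by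
    rw [← Finset.card_union_of_disjoint hdisj, hunion]
    exact hnf9 x0 hx0'
  omega

theorem no_design_with_involution_fixing_18 :
    ¬ ∃ B : Fin 36 → Finset (Fin 36), IsDesign B ∧ HasOrder2AutWithFixed B 18 := by
  rintro ⟨B, ⟨hcard, hlam⟩, φ, ψ, hB, hφ2, hφne, hfix⟩
  have hinv : ∀ x, φ (φ x) = x := fun x => congrFun hφ2 x
  have hrep := repl B hcard hlam
  have hdual : ∀ {i j : Fin 36}, j ≠ i → (B i ∩ B j).card = 6 :=
    fun h => dual_lam B hcard hlam hrep h
  have hσB : ∀ i x, x ∈ B (ψ i) ↔ φ x ∈ B i := by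
    intro i x
    rw [hB i, Finset.mem_image]
    constructor
    · rintro ⟨z, hz, rfl⟩; rwa [hinv]
    · intro h; exact ⟨φ x, h, hinv x⟩
  -- numbers of fixed points within blocks
  set f : Fin 36 → ℕ := fun i => (Finset.univ.filter fun x => x ∈ B i ∧ φ x = x).card with hf
  set c : Fin 36 → ℕ := fun i => (Finset.univ.filter fun x => x ∈ B i ∧ φ x ∈ B i).card with hc
  have hmoved : (Finset.univ.filter fun x => ¬ φ x = x).card = 18 := by
    have h := Finset.card_filter_add_card_filter_not
      (s := (Finset.univ : Finset (Fin 36))) (p := fun x => φ x = x)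
    rw [hfix, Finset.card_univ, Fintype.card_fin] at h
    omega
  -- Σ f = 270
  have hsumf : ∑ i, f i = 270 := by
    have key := swap_count (fun i (x : Fin 36) => x ∈ B i ∧ φ x = x)
    have hR : ∀ x : Fin 36, (Finset.univ.filter fun i => x ∈ B i ∧ φ x = x).card
        = if φ x = x then 15 else 0 := by
      intro x
      by_cases hx : φ x = x
      · rw [if_pos hx]
        have : (Finset.univ.filter fun i => x ∈ B i ∧ φ x = x)
            = (Finset.univ.filter fun i => x ∈ B i) := by ext i; simp [hx]
        rw [this]; exact hrep x
      · simp [hx]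
    rw [hf]
    rw [key, Finset.sum_congr rfl (fun x _ => hR x), ← Finset.sum_filter,
      Finset.sum_const, smul_eq_mul, hfix]
  -- Σ (f² - f) = 1836
  have hsumf2 : ∑ i, (f i * f i - f i) = 1836 := by
    have key := swap_count (fun i (p : Fin 36 × Fin 36) =>
      (φ p.1 = p.1 ∧ φ p.2 = p.2 ∧ p.1 ≠ p.2) ∧ p.1 ∈ B i ∧ p.2 ∈ B i)
    have hL : ∀ i, (Finset.univ.filter fun p : Fin 36 × Fin 36 =>
        (φ p.1 = p.1 ∧ φ p.2 = p.2 ∧ p.1 ≠ p.2) ∧ p.1 ∈ B i ∧ p.2 ∈ B i)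
        = (Finset.univ.filter fun x => x ∈ B i ∧ φ x = x).offDiag := by
      intro i; ext p
      rw [Finset.mem_filter, Finset.mem_offDiag, Finset.mem_filter, Finset.mem_filter]
      simp only [Finset.mem_univ, true_and]
      exact ⟨fun h => ⟨⟨h.2.1, h.1.1⟩, ⟨h.2.2, h.1.2.1⟩, h.1.2.2⟩,
        fun h => ⟨⟨h.1.2, h.2.1.2, h.2.2⟩, h.1.1, h.2.1.1⟩⟩
    have hR : ∀ p : Fin 36 × Fin 36,
        (Finset.univ.filter fun i => (φ p.1 = p.1 ∧ φ p.2 = p.2 ∧ p.1 ≠ p.2)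
          ∧ p.1 ∈ B i ∧ p.2 ∈ B i).card
        = if φ p.1 = p.1 ∧ φ p.2 = p.2 ∧ p.1 ≠ p.2 then 6 else 0 := by
      intro p
      by_cases hp : φ p.1 = p.1 ∧ φ p.2 = p.2 ∧ p.1 ≠ p.2
      · rw [if_pos hp]
        have : (Finset.univ.filter fun i => (φ p.1 = p.1 ∧ φ p.2 = p.2 ∧ p.1 ≠ p.2)
            ∧ p.1 ∈ B i ∧ p.2 ∈ B i)
            = (Finset.univ.filter fun i => p.1 ∈ B i ∧ p.2 ∈ B i) := by
          ext i; simp [hp]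
        rw [this]; exact hlam p.1 p.2 hp.2.2
      · simp [hp]
    calc ∑ i, (f i * f i - f i)
        = ∑ i, (Finset.univ.filter fun p : Fin 36 × Fin 36 =>
            (φ p.1 = p.1 ∧ φ p.2 = p.2 ∧ p.1 ≠ p.2) ∧ p.1 ∈ B i ∧ p.2 ∈ B i).card := by
          refine Finset.sum_congr rfl (fun i _ => ?_)
          rw [hL i, Finset.offDiag_card, hf]
      _ = ∑ p : Fin 36 × Fin 36, (Finset.univ.filter fun i =>
            (φ p.1 = p.1 ∧ φ p.2 = p.2 ∧ p.1 ≠ p.2) ∧ p.1 ∈ B i ∧ p.2 ∈ B i).card := key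
      _ = ∑ p : Fin 36 × Fin 36,
            if φ p.1 = p.1 ∧ φ p.2 = p.2 ∧ p.1 ≠ p.2 then 6 else 0 := by
          exact Finset.sum_congr rfl (fun p _ => hR p)
      _ = 1836 := by
          rw [← Finset.sum_filter, Finset.sum_const, smul_eq_mul]
          have : (Finset.univ.filter fun p : Fin 36 × Fin 36 =>
              φ p.1 = p.1 ∧ φ p.2 = p.2 ∧ p.1 ≠ p.2)
              = (Finset.univ.filter fun x : Fin 36 => φ x = x).offDiag := by
            ext p
            rw [Finset.mem_filter, Finset.mem_offDiag, Finset.mem_filter, Finset.mem_filter]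
            simp only [Finset.mem_univ, true_and]
          rw [this, Finset.offDiag_card, hfix]
  -- Σ c = 378
  have hsumc : ∑ i, c i = 378 := by
    have key := swap_count (fun i (x : Fin 36) => x ∈ B i ∧ φ x ∈ B i)
    have hR : ∀ x : Fin 36, (Finset.univ.filter fun i => x ∈ B i ∧ φ x ∈ B i).card
        = if φ x = x then 15 else 6 := by
      intro x
      by_cases hx : φ x = x
      · rw [if_pos hx]
        have : (Finset.univ.filter fun i => x ∈ B i ∧ φ x ∈ B i)
            = (Finset.univ.filter fun i => x ∈ B i) := by ext i; simp [hx]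
        rw [this]; exact hrep x
      · rw [if_neg hx]
        exact hlam x (φ x) (fun h => hx h.symm)
    rw [hc, key, Finset.sum_congr rfl (fun x _ => hR x)]
    rw [Finset.sum_ite, Finset.sum_const, Finset.sum_const, smul_eq_mul, smul_eq_mul, hfix, hmoved]
  -- c via block intersections
  have hci : ∀ i, c i = (B i ∩ B (ψ i)).card := by
    intro i
    have e : (Finset.univ.filter fun x => x ∈ B i ∧ φ x ∈ B i) = B i ∩ B (ψ i) := by
      ext x
      simp only [Finset.mem_filter, Finset.mem_univ, true_and, Finset.mem_inter, hσB i x]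
    rw [hc]
    exact congrArg Finset.card e
  have hcFB : ∀ i, ψ i = i → c i = 15 := by
    intro i h; rw [hci, h, Finset.inter_self, hcard]
  have hcNB : ∀ i, ψ i ≠ i → c i = 6 := by
    intro i h; rw [hci]; exact hdual h
  -- 18 fixed blocks
  have hcards := Finset.card_filter_add_card_filter_not
    (s := (Finset.univ : Finset (Fin 36))) (p := fun i => ψ i = i)
  rw [Finset.card_univ, Fintype.card_fin] at hcards
  have hFBcard : (Finset.univ.filter fun i => ψ i = i).card = 18 := by
    have hsplit := Finset.sum_filter_add_sum_filter_not Finset.univ (fun i => ψ i = i) c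
    rw [Finset.sum_congr rfl (fun i hi => hcFB i (Finset.mem_filter.mp hi).2),
        Finset.sum_congr rfl (fun i hi => hcNB i (Finset.mem_filter.mp hi).2),
        Finset.sum_const, Finset.sum_const, smul_eq_mul, smul_eq_mul, hsumc] at hsplit
    simp only [ne_eq] at hsplit
    omega
  have hNBcard : (Finset.univ.filter fun i => ¬ ψ i = i).card = 18 := by omega
  -- f ≤ c
  have hfc : ∀ i, f i ≤ c i := by
    intro i
    rw [hf, hc]
    apply Finset.card_le_card
    intro x hx
    simp only [Finset.mem_filter, Finset.mem_univ, true_and] at hx ⊢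
    exact ⟨hx.1, by rw [hx.2]; exact hx.1⟩
  have hfNBle : ∀ i, ψ i ≠ i → f i ≤ 6 := fun i h => (hfc i).trans (le_of_eq (hcNB i h))
  -- integer sums
  have hsumfZ : ∑ i, (f i : ℤ) = 270 := by
    rw [← Nat.cast_sum, hsumf]; norm_num
  have hsumsqZ : ∑ i, (f i : ℤ) ^ 2 = 2106 := by
    have h1 : ∑ i, ((f i : ℤ) ^ 2 - (f i : ℤ)) = 1836 := by
      have : ∀ i : Fin 36, (f i : ℤ) ^ 2 - (f i : ℤ) = ((f i * f i - f i : ℕ) : ℤ) := by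
        intro i
        rw [Nat.cast_sub (nat_le_mul_self _)]
        push_cast; ring
      rw [Finset.sum_congr rfl (fun i _ => this i), ← Nat.cast_sum, hsumf2]
      norm_num
    rw [Finset.sum_sub_distrib, hsumfZ] at h1
    linarith
  have hsplitZ : (∑ i ∈ Finset.univ.filter (fun i => ψ i = i), (f i : ℤ))
      + (∑ i ∈ Finset.univ.filter (fun i => ¬ ψ i = i), (f i : ℤ)) = 270 := by
    rw [Finset.sum_filter_add_sum_filter_not, hsumfZ]
  have hsplitsqZ : (∑ i ∈ Finset.univ.filter (fun i => ψ i = i), (f i : ℤ) ^ 2)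
      + (∑ i ∈ Finset.univ.filter (fun i => ¬ ψ i = i), (f i : ℤ) ^ 2) = 2106 := by
    rw [Finset.sum_filter_add_sum_filter_not, hsumsqZ]
  have hANle : (∑ i ∈ Finset.univ.filter (fun i => ¬ ψ i = i), (f i : ℤ)) ≤ 108 := by
    calc (∑ i ∈ Finset.univ.filter (fun i => ¬ ψ i = i), (f i : ℤ))
        ≤ ∑ i ∈ Finset.univ.filter (fun i => ¬ ψ i = i), (6 : ℤ) := by
          apply Finset.sum_le_sum
          intro i hi
          exact_mod_cast Nat.cast_le.mpr (hfNBle i (Finset.mem_filter.mp hi).2)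
      _ = 108 := by rw [Finset.sum_const, hNBcard]; norm_num
  have hT : (∑ i ∈ Finset.univ.filter (fun i => ψ i = i), ((f i : ℤ) - 9) ^ 2)
      + (∑ i ∈ Finset.univ.filter (fun i => ¬ ψ i = i), ((f i : ℤ) - 6) ^ 2)
      = 972 - 6 * (∑ i ∈ Finset.univ.filter (fun i => ψ i = i), (f i : ℤ)) := by
    have e1 : ∀ i : Fin 36, ((f i : ℤ) - 9) ^ 2 = (f i : ℤ) ^ 2 - 18 * (f i : ℤ) + 81 := by
      intro i; ring
    have e2 : ∀ i : Fin 36, ((f i : ℤ) - 6) ^ 2 = (f i : ℤ) ^ 2 - 12 * (f i : ℤ) + 36 := by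
      intro i; ring
    rw [Finset.sum_congr rfl (fun i _ => e1 i), Finset.sum_congr rfl (fun i _ => e2 i)]
    rw [Finset.sum_add_distrib, Finset.sum_add_distrib, Finset.sum_sub_distrib,
      Finset.sum_sub_distrib, ← Finset.mul_sum, ← Finset.mul_sum,
      Finset.sum_const, Finset.sum_const, hFBcard, hNBcard]
    have hAN : (∑ i ∈ Finset.univ.filter (fun i => ¬ ψ i = i), (f i : ℤ))
        = 270 - (∑ i ∈ Finset.univ.filter (fun i => ψ i = i), (f i : ℤ)) := by linarith
    have hsq2 : (∑ i ∈ Finset.univ.filter (fun i => ¬ ψ i = i), (f i : ℤ) ^ 2)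
        = 2106 - (∑ i ∈ Finset.univ.filter (fun i => ψ i = i), (f i : ℤ) ^ 2) := by linarith
    rw [hAN, hsq2]
    ring
  have hAFge : (162 : ℤ) ≤ ∑ i ∈ Finset.univ.filter (fun i => ψ i = i), (f i : ℤ) := by
    linarith
  have hS1nn : (0:ℤ) ≤ ∑ i ∈ Finset.univ.filter (fun i => ψ i = i), ((f i : ℤ) - 9) ^ 2 :=
    Finset.sum_nonneg (fun i _ => sq_nonneg _)
  have hS2nn : (0:ℤ) ≤ ∑ i ∈ Finset.univ.filter (fun i => ¬ ψ i = i), ((f i : ℤ) - 6) ^ 2 :=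
    Finset.sum_nonneg (fun i _ => sq_nonneg _)
  have hS1z : ∑ i ∈ Finset.univ.filter (fun i => ψ i = i), ((f i : ℤ) - 9) ^ 2 = 0 := by
    linarith
  have hS2z : ∑ i ∈ Finset.univ.filter (fun i => ¬ ψ i = i), ((f i : ℤ) - 6) ^ 2 = 0 := by
    linarith
  have hf9 : ∀ i, ψ i = i → f i = 9 := by
    intro i hi
    have := (Finset.sum_eq_zero_iff_of_nonneg (fun l _ => sq_nonneg ((f l : ℤ) - 9))).mp hS1z
      i (Finset.mem_filter.mpr ⟨Finset.mem_univ i, hi⟩)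
    have h2 := pow_eq_zero_iff (n := 2) (by norm_num) |>.mp this
    have : (f i : ℤ) = 9 := by linarith
    exact_mod_cast this
  have hf6 : ∀ i, ψ i ≠ i → f i = 6 := by
    intro i hi
    have := (Finset.sum_eq_zero_iff_of_nonneg (fun l _ => sq_nonneg ((f l : ℤ) - 6))).mp hS2z
      i (Finset.mem_filter.mpr ⟨Finset.mem_univ i, hi⟩)
    have h2 := pow_eq_zero_iff (n := 2) (by norm_num) |>.mp this
    have : (f i : ℤ) = 6 := by linarith
    exact_mod_cast this
  exact stage2 B φ ψ hcard hlam hrep hinv hφne hσB hmoved hFBcard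
    (fun i hi => hcNB i hi) (fun i hi => hf9 i hi) (fun i hi => hf6 i hi)
end

section
/- If B is a symmetric 2-(36,15,6) design admitting an automorphism of order two with f fixed points, and the F₃-row span of the incidence matrix of B is a self-dual ternary code of length 36, then f = 4 or f = 12. -/
/-- The `F₃`-row span of the incidence matrix of the design `B`. -/
def rowSpan (B : Fin 36 → Finset (Fin 36)) : Submodule (ZMod 3) (Fin 36 → ZMod 3) :=
  Submodule.span (ZMod 3)
    (Set.range fun i => fun x => if x ∈ B i then (1 : ZMod 3) else 0)

/-- `C` is a self-dual ternary code of length 36: it coincides with its orthogonal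
complement with respect to the standard dot product on `(ZMod 3)^36`. -/
def IsSelfDualCode (C : Submodule (ZMod 3) (Fin 36 → ZMod 3)) : Prop :=
  ∀ x : Fin 36 → ZMod 3, x ∈ C ↔ ∀ y ∈ C, ∑ i, x i * y i = 0

/-!
An involutory automorphism `φ` with `f` fixed points has `t` transpositions, `f + 2t = 36`. The
codewords negated by `φ`, read on one point of each transposition, form a self-dual ternary code of
length `t`: on such words the dot product is twice the restricted one, and `2 ≠ 0` in `𝔽₃`. A
self-dual code `L ⊆ K^n` forces `n = 2 dim L` and makes `(-1)^(dim L)` a square in `K` (compare the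
Gram determinant of the standard basis with that of a basis adapted to `L`); as `-1` is not a square
in `𝔽₃`, `4 ∣ t`, so `f ∈ {4, 12, 20, 28, 36}`.

On the other hand, `φ` moves some block `B`, and its fixed points lie in `B ∩ φB` or outside
`B ∪ φB`; since two blocks of a symmetric design meet in `λ = 6` points, `f ≤ 6 + (36 - 24) = 18`.
-/

open Finset Matrix Module

section Design

variable {α β : Type*} [DecidableEq α] (B : β → Finset α) {k l : ℕ}

theorem card_blocks_through_mul [Fintype α] [Fintype β] (hk : ∀ i, #(B i) = k)
    (hl : ∀ x y, x ≠ y → #{i | x ∈ B i ∧ y ∈ B i} = l) (x : α) :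
    #{i | x ∈ B i} * (k - 1) = l * (Fintype.card α - 1) := by
  have h := sum_card_bipartiteAbove_eq_sum_card_bipartiteBelow (fun i y => y ∈ B i)
    (s := {i | x ∈ B i}) (t := univ.erase x)
  have habove : ∀ i ∈ ({i | x ∈ B i} : Finset β),
      #(bipartiteAbove (fun i y => y ∈ B i) (univ.erase x) i) = k - 1 := by
    intro i hi
    rw [mem_filter] at hi
    rw [bipartiteAbove, ← hk i, ← card_erase_of_mem hi.2]
    congr 1
    ext y
    simp [and_comm]
  have hbelow : ∀ y ∈ univ.erase x,
      #(bipartiteBelow (fun i y => y ∈ B i) ({i | x ∈ B i} : Finset β) y) = l := by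
    intro y hy
    rw [bipartiteBelow, filter_filter]
    exact hl x y (ne_of_mem_erase hy).symm
  rw [sum_congr rfl habove, sum_congr rfl hbelow, sum_const, sum_const, smul_eq_mul, smul_eq_mul,
    card_erase_of_mem (mem_univ x), card_univ] at h
  rw [h, mul_comm]

theorem sum_card_inter [Fintype β] (hk : ∀ i, #(B i) = k) (hr : ∀ x, #{i | x ∈ B i} = k)
    (i : β) : ∑ j, #(B i ∩ B j) = k * k := by
  have h := sum_card_bipartiteAbove_eq_sum_card_bipartiteBelow (fun j x => x ∈ B j)
    (s := univ) (t := B i)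
  simp only [bipartiteAbove, bipartiteBelow, filter_mem_eq_inter] at h
  rw [h, sum_congr rfl fun x _ => hr x, sum_const, hk, smul_eq_mul]

theorem sum_card_inter_sq [Fintype β] (hk : ∀ i, #(B i) = k)
    (hl : ∀ x y, x ≠ y → #{i | x ∈ B i ∧ y ∈ B i} = l) (hr : ∀ x, #{i | x ∈ B i} = k) (i : β) :
    ∑ j, #(B i ∩ B j) ^ 2 = k * k + (k * k - k) * l := by
  let r : β → α × α → Prop := fun j p => p.1 ∈ B j ∧ p.2 ∈ B j
  have h := sum_card_bipartiteAbove_eq_sum_card_bipartiteBelow r (s := univ) (t := B i ×ˢ B i)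
  have hsq (j : β) : #(B i ∩ B j) ^ 2 = #(bipartiteAbove r (B i ×ˢ B i) j) := by
    rw [sq, ← card_product, bipartiteAbove, filter_product, filter_mem_eq_inter]
  have hdiag : ∀ p ∈ (B i).diag, #(bipartiteBelow r univ p) = k := by
    intro p hp
    rw [mem_diag] at hp
    simp [r, bipartiteBelow, ← hp.2, hr]
  have hoff : ∀ p ∈ (B i).offDiag, #(bipartiteBelow r univ p) = l := by
    intro p hp
    rw [mem_offDiag] at hp
    exact hl _ _ hp.2.2
  rw [sum_congr rfl fun j _ => hsq j, h, ← diag_union_offDiag, sum_union (disjoint_diag_offDiag _),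
    sum_congr rfl hdiag, sum_congr rfl hoff, sum_const, sum_const, diag_card, offDiag_card, hk,
    smul_eq_mul, smul_eq_mul]

theorem card_inter_eq_of_symmetric [Fintype β] (hk : ∀ i, #(B i) = k)
    (hl : ∀ x y, x ≠ y → #{i | x ∈ B i ∧ y ∈ B i} = l) (hr : ∀ x, #{i | x ∈ B i} = k)
    (hkl : l * (Fintype.card β - 1) = k * (k - 1)) {i j : β} (hij : i ≠ j) :
    #(B i ∩ B j) = l := by
  classical
  set n : β → ℤ := fun j => #(B i ∩ B j)
  have h1 : ∑ j, n j = k * k := by simp only [n]; exact_mod_cast sum_card_inter B hk hr i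
  have h2 : ∑ j, n j ^ 2 = k * k + (k * k - k) * l := by
    have := congrArg (Nat.cast : ℕ → ℤ) (sum_card_inter_sq B hk hl hr i)
    push_cast [Nat.cast_sub (Nat.le_mul_self k)] at this
    exact this
  have hb : 1 ≤ Fintype.card β := Fintype.card_pos_iff.mpr ⟨i⟩
  have hkl' : (l : ℤ) * (Fintype.card β - 1) = k * k - k := by
    rw [Nat.mul_sub_one k k] at hkl
    have := congrArg (Nat.cast : ℕ → ℤ) hkl
    push_cast [Nat.cast_sub hb, Nat.cast_sub (Nat.le_mul_self k)] at this
    exact this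
  have hni : n i = k := by simp [n, hk]
  -- the other blocks meet `B i` in `l` points on average, with variance zero
  have hvar : ∑ j ∈ univ.erase i, (n j - l) ^ 2 = 0 := by
    rw [sum_erase_eq_sub (mem_univ i)]
    simp only [sub_sq, sum_add_distrib, sum_sub_distrib, ← sum_mul, ← mul_sum, h1, h2, hni,
      sum_const, card_univ, nsmul_eq_mul]
    linear_combination (l : ℤ) * hkl'
  have := (sum_eq_zero_iff_of_nonneg fun j _ => sq_nonneg (n j - l)).mp hvar j
    (mem_erase.mpr ⟨hij.symm, mem_univ j⟩)
  simpa [n, sub_eq_zero] using this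

theorem exists_image_ne_of_ne_one [Fintype β]
    (hl : ∀ x y, x ≠ y → #{i | x ∈ B i ∧ y ∈ B i} = l)
    (hr : ∀ x, l < #{i | x ∈ B i}) {φ : Equiv.Perm α} (hφ : φ ≠ 1) :
    ∃ i, (B i).image φ ≠ B i := by
  by_contra! h
  obtain ⟨x, hx⟩ : ∃ x, φ x ≠ x := by
    by_contra! h'
    exact hφ (Equiv.ext h')
  have hsub : ({i | x ∈ B i} : Finset β) ⊆ ({i | x ∈ B i ∧ φ x ∈ B i} : Finset β) := by
    intro i hi
    rw [mem_filter] at hi ⊢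
    exact ⟨hi.1, hi.2, h i ▸ mem_image_of_mem φ hi.2⟩
  have := card_le_card hsub
  rw [hl x (φ x) hx.symm] at this
  exact (hr x).not_ge this

theorem card_fixed_add_two_mul_le [Fintype α] (hk : ∀ i, #(B i) = k)
    (hinter : ∀ i j, i ≠ j → #(B i ∩ B j) = l) {φ : Equiv.Perm α} {i j : β}
    (hj : B j = (B i).image φ) (hji : B j ≠ B i) :
    #{x | φ x = x} + 2 * k ≤ Fintype.card α + 2 * l := by
  have hfix : ({x | φ x = x} : Finset α) ⊆ B i ∩ B j ∪ (B i ∪ B j)ᶜ := by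
    intro x hx
    rw [mem_filter] at hx
    have hxj : x ∈ B j ↔ x ∈ B i := by
      rw [hj, mem_image]
      exact ⟨fun ⟨y, hy, hyx⟩ => φ.injective (hyx.trans hx.2.symm) ▸ hy, fun h => ⟨x, h, hx.2⟩⟩
    by_cases hxi : x ∈ B i <;> simp [hxi, hxj]
  have hij : i ≠ j := fun h => hji (h ▸ rfl)
  have hunion := card_union_add_card_inter (B i) (B j)
  have hfix_le := (card_le_card hfix).trans (card_union_le _ _)
  rw [hk, hk, hinter i j hij] at hunion
  rw [card_compl, hinter i j hij] at hfix_le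
  have := card_le_univ (B i ∪ B j)
  omega

end Design

namespace Matrix

variable {R n : Type*} [CommRing R] [Fintype n] [DecidableEq n]

theorem det_fromBlocks_zero_one_one_zero :
    (fromBlocks 0 1 1 0 : Matrix (n ⊕ n) (n ⊕ n) R).det = (-1) ^ Fintype.card n := by
  have hshear : fromBlocks 1 1 0 1 * fromBlocks 0 1 1 0 =
      (fromBlocks 1 1 1 0 : Matrix (n ⊕ n) (n ⊕ n) R) := by
    simp [fromBlocks_multiply]
  have := congrArg det hshear
  rwa [det_mul, det_fromBlocks_zero₂₁, det_fromBlocks_one₁₁, det_one, one_mul, one_mul, mul_one,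
    zero_sub, det_neg, det_one, mul_one] at this

theorem det_fromBlocks_zero₁₁ (B C D : Matrix n n R) :
    (fromBlocks 0 B C D).det = (-1) ^ Fintype.card n * B.det * C.det := by
  have hswap : fromBlocks B 0 D C * fromBlocks 0 1 1 0 = fromBlocks 0 B C D := by
    simp [fromBlocks_multiply]
  rw [← hswap, det_mul, det_fromBlocks_zero₁₂, det_fromBlocks_zero_one_one_zero]
  ring

end Matrix

section SelfDual

variable {K ι : Type*} [Field K] [Fintype ι] [DecidableEq ι] {L : Submodule K (ι → K)}

theorem card_eq_finrank_add_finrank_of_selfDual (hL : ∀ x, x ∈ L ↔ ∀ y ∈ L, x ⬝ᵥ y = 0) :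
    Fintype.card ι = finrank K L + finrank K L := by
  have hnd : (toBilin' (1 : Matrix ι ι K)).Nondegenerate :=
    nondegenerate_toBilin'_iff.mpr (nondegenerate_of_det_ne_zero (by simp))
  have horth : (toBilin' (1 : Matrix ι ι K)).orthogonal L = L := by
    ext x
    simp only [LinearMap.BilinForm.mem_orthogonal_iff, toBilin'_apply', one_mulVec, hL x,
      dotProduct_comm x]
  have hle := Submodule.finrank_le L
  have := LinearMap.BilinForm.finrank_orthogonal hnd L
  rw [horth, finrank_fintype_fun_eq_card] at this
  rw [finrank_fintype_fun_eq_card] at hle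
  omega

theorem isSquare_neg_one_pow_finrank_of_selfDual (hL : ∀ x, x ∈ L ↔ ∀ y ∈ L, x ⬝ᵥ y = 0) :
    IsSquare ((-1 : K) ^ finrank K L) := by
  set s := finrank K L
  have hcard := card_eq_finrank_add_finrank_of_selfDual hL
  obtain ⟨W, hW⟩ := Submodule.exists_isCompl L
  have hW_rank : finrank K W = s := by
    have := Submodule.finrank_add_eq_of_isCompl hW
    rw [finrank_fintype_fun_eq_card] at this
    omega
  let bL : Basis (Fin s) K L := finBasisOfFinrankEq K L rfl
  let b : Basis (Fin s ⊕ Fin s) K (ι → K) :=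
    (bL.prod (finBasisOfFinrankEq K W hW_rank)).map (Submodule.prodEquivOfIsCompl L W hW)
  have hb_inl (i : Fin s) : b (Sum.inl i) = bL i := by
    simp [b, Basis.prod_apply]
  let e : ι ≃ Fin s ⊕ Fin s := Fintype.equivOfCardEq (by simpa [s] using hcard)
  let P := ((Pi.basisFun K ι).reindex e).toMatrix b
  have hP : IsUnit P.det := by
    rw [← Basis.det_apply]
    exact Basis.isUnit_det _ _
  -- `Pᵀ * P` is the Gram matrix of `b`; its upper left block vanishes since `L ⊆ Lᗮ`
  have hgram (k l) : (Pᵀ * P) k l = b k ⬝ᵥ b l := by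
    simp only [mul_apply, transpose_apply, P, Basis.toMatrix_apply, Basis.repr_reindex,
      Finsupp.mapDomain_equiv_apply, Pi.basisFun_repr]
    exact e.symm.sum_comp fun x => b k x * b l x
  set M := (Pᵀ * P).toBlocks₁₂
  have hblocks : Pᵀ * P = fromBlocks 0 M Mᵀ (Pᵀ * P).toBlocks₂₂ := by
    conv_lhs => rw [← fromBlocks_toBlocks (Pᵀ * P)]
    congr 1
    · ext i j
      simp only [toBlocks₁₁, of_apply, hgram, hb_inl]
      exact (hL _).mp (bL i).2 _ (bL j).2
    · ext i j
      simp only [M, toBlocks₂₁, toBlocks₁₂, transpose_apply, of_apply, hgram, dotProduct_comm]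
  have hdet : P.det ^ 2 = (-1) ^ s * M.det ^ 2 := by
    have := congrArg det hblocks
    rw [det_mul, det_transpose, det_fromBlocks_zero₁₁, det_transpose, Fintype.card_fin] at this
    linear_combination this
  have hM : M.det ≠ 0 := fun hM =>
    hP.ne_zero <| (pow_eq_zero_iff two_ne_zero).mp (by rw [hdet, hM]; ring)
  exact ⟨P.det / M.det, by field_simp; linear_combination -hdet⟩

theorem four_dvd_card_of_selfDual (hK : ¬IsSquare (-1 : K))
    (hL : ∀ x, x ∈ L ↔ ∀ y ∈ L, x ⬝ᵥ y = 0) : 4 ∣ Fintype.card ι := by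
  obtain ⟨m, hm⟩ : Even (finrank K L) := by
    by_contra hodd
    rw [Nat.not_even_iff_odd] at hodd
    apply hK
    have := isSquare_neg_one_pow_finrank_of_selfDual hL
    rwa [hodd.neg_one_pow] at this
  have := card_eq_finrank_add_finrank_of_selfDual hL
  omega

end SelfDual

theorem mem_eigenspace_funLeft_neg_one {ι K : Type*} [Field K] {φ : ι → ι} {u : ι → K} :
    u ∈ Module.End.eigenspace (LinearMap.funLeft K K φ) (-1) ↔ ∀ x, u (φ x) = -u x := by
  simp [funext_iff]

section Involution

variable {ι : Type*} [Fintype ι] [LinearOrder ι]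

/-- For an involution, one point from each of its 2-cycles. -/
def movedUp (φ : Equiv.Perm ι) : Finset ι := {x | x < φ x}

theorem sum_eq_two_nsmul_sum_movedUp {M : Type*} [AddCommMonoid M] {φ : Equiv.Perm ι}
    (hφ : Function.Involutive φ) {g : ι → M} (hg : ∀ x, g (φ x) = g x)
    (hfix : ∀ x, φ x = x → g x = 0) :
    ∑ x, g x = 2 • ∑ x ∈ movedUp φ, g x := by
  have hsplit (x : ι) : g x = (if x < φ x then g x else 0) + (if φ x < x then g x else 0) := by
    rcases lt_trichotomy x (φ x) with h | h | h
    · simp [h, h.not_gt]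
    · simp [hfix x h.symm]
    · simp [h, h.not_gt]
  have hswap : ∑ x, (if φ x < x then g x else 0) = ∑ x, (if x < φ x then g x else 0) := by
    rw [← Equiv.sum_comp φ fun x => if φ x < x then g x else 0]
    simp only [hφ _, hg]
  rw [sum_congr rfl fun x _ => hsplit x, sum_add_distrib, hswap, two_nsmul, movedUp, sum_filter]

theorem card_fixed_add_two_mul_card_movedUp {φ : Equiv.Perm ι} (hφ : Function.Involutive φ) :
    #{x | φ x = x} + 2 * #(movedUp φ) = Fintype.card ι := by
  have h := sum_eq_two_nsmul_sum_movedUp (g := fun x => if ¬φ x = x then 1 else 0) hφ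
    (by simp [hφ _, eq_comm]) (by simp +contextual)
  have hmoved : ∑ x ∈ movedUp φ, (if ¬φ x = x then 1 else 0) = #(movedUp φ) := by
    rw [card_eq_sum_ones]
    refine sum_congr rfl fun x hx => ?_
    simp only [movedUp, mem_filter, mem_univ, true_and] at hx
    simp [hx.ne']
  rw [hmoved, ← card_filter, smul_eq_mul] at h
  rw [← h, card_filter_add_card_filter_not, card_univ]

variable {K : Type*} [Field K]

theorem dotProduct_eq_sum_movedUp (h2 : (2 : K) ≠ 0) {φ : Equiv.Perm ι}
    (hφ : Function.Involutive φ) {u : ι → K} (hu : ∀ x, u (φ x) = -u x) (v : ι → K) :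
    u ⬝ᵥ v = ∑ x ∈ movedUp φ, u x * (v x - v (φ x)) := by
  have hfold : ∑ x, u x * (v x - v (φ x)) = 2 • ∑ x ∈ movedUp φ, u x * (v x - v (φ x)) :=
    sum_eq_two_nsmul_sum_movedUp hφ (by simp only [hu, hφ _]; intro x; ring)
      (by simp +contextual)
  have hshift : ∑ x, u x * v (φ x) = -(u ⬝ᵥ v) := by
    rw [← Equiv.sum_comp φ fun x => u x * v (φ x)]
    simp [hu, hφ _, dotProduct]
  have htwice : ∑ x, u x * (v x - v (φ x)) = 2 * (u ⬝ᵥ v) := by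
    simp only [mul_sub, sum_sub_distrib, hshift]
    rw [← dotProduct]
    ring
  rw [htwice, nsmul_eq_mul, Nat.cast_ofNat] at hfold
  exact mul_left_cancel₀ h2 hfold

theorem exists_neg_eigenvector_extending {φ : Equiv.Perm ι} (hφ : Function.Involutive φ)
    (w : movedUp φ → K) : ∃ u : ι → K, (∀ x, u (φ x) = -u x) ∧ ∀ x : movedUp φ, u x = w x := by
  let e : ι → K := fun x => if h : x ∈ movedUp φ then w ⟨x, h⟩ else 0
  refine ⟨fun x => e x - e (φ x), fun x => by simp only [hφ x]; ring, fun x => ?_⟩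
  have hx : φ x ∉ movedUp φ := by
    have := x.2
    simp only [movedUp, mem_filter, mem_univ, true_and, hφ _] at this ⊢
    exact this.le.not_gt
  simp [e, hx]

def restrictNegEigen (φ : Equiv.Perm ι) (C : Submodule K (ι → K)) :
    Submodule K (movedUp φ → K) :=
  (C ⊓ Module.End.eigenspace (LinearMap.funLeft K K φ) (-1)).map
    (LinearMap.funLeft K K Subtype.val)

theorem selfDual_restrictNegEigen (h2 : (2 : K) ≠ 0) {φ : Equiv.Perm ι}
    (hφ : Function.Involutive φ) {C : Submodule K (ι → K)}
    (hC : ∀ x, x ∈ C ↔ ∀ y ∈ C, x ⬝ᵥ y = 0) (hCφ : ∀ c ∈ C, c ∘ φ ∈ C) (w : movedUp φ → K) :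
    w ∈ restrictNegEigen φ C ↔ ∀ y ∈ restrictNegEigen φ C, w ⬝ᵥ y = 0 := by
  have hrestrict (u v : ι → K) : LinearMap.funLeft K K (Subtype.val : movedUp φ → ι) u ⬝ᵥ
      LinearMap.funLeft K K Subtype.val v = ∑ x ∈ movedUp φ, u x * v x :=
    sum_coe_sort (movedUp φ) fun x => u x * v x
  constructor
  · rintro ⟨u, hu, rfl⟩ _ ⟨v, hv, rfl⟩
    rw [SetLike.mem_coe, Submodule.mem_inf, mem_eigenspace_funLeft_neg_one] at hu hv
    have huv := (hC u).mp hu.1 v hv.1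
    simp only [dotProduct_eq_sum_movedUp h2 hφ hu.2, hv.2, sub_neg_eq_add, ← two_mul,
      mul_left_comm _ (2 : K), ← mul_sum] at huv
    simpa [hrestrict] using (mul_eq_zero.mp huv).resolve_left h2
  · intro hw
    obtain ⟨u, hu, huw⟩ := exists_neg_eigenvector_extending (K := K) hφ w
    replace huw : LinearMap.funLeft K K Subtype.val u = w := funext huw
    refine ⟨u, Submodule.mem_inf.mpr ⟨(hC u).mpr fun c hc => ?_,
      mem_eigenspace_funLeft_neg_one.mpr hu⟩, huw⟩
    have hc' : (fun x => c x - c (φ x)) ∈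
        C ⊓ Module.End.eigenspace (LinearMap.funLeft K K φ) (-1) :=
      Submodule.mem_inf.mpr ⟨C.sub_mem hc (hCφ c hc),
        mem_eigenspace_funLeft_neg_one.mpr fun x => by simp only [hφ x]; ring⟩
    have := hw _ ⟨_, hc', rfl⟩
    rwa [← huw, hrestrict, ← dotProduct_eq_sum_movedUp h2 hφ hu] at this

end Involution

theorem comp_mem_rowSpan {B : Fin 36 → Finset (Fin 36)} {φ ψ : Equiv.Perm (Fin 36)}
    (hψ : ∀ i, B (ψ i) = (B i).image φ) (hφ : Function.Involutive φ) {c : Fin 36 → ZMod 3}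
    (hc : c ∈ rowSpan B) : c ∘ φ ∈ rowSpan B := by
  have hmem (i x) : φ x ∈ B i ↔ x ∈ B (ψ i) := by
    rw [hψ, mem_image]
    exact ⟨fun h => ⟨φ x, h, hφ x⟩, fun ⟨y, hy, hyx⟩ => hyx ▸ (hφ y).symm ▸ hy⟩
  refine (Submodule.span_le.mpr ?_ : rowSpan B ≤ (rowSpan B).comap (LinearMap.funLeft _ _ φ)) hc
  rintro _ ⟨i, rfl⟩
  exact Submodule.subset_span ⟨ψ i, funext fun x => by simp [hmem]⟩

theorem selfdual_code_fixed_points (B : Fin 36 → Finset (Fin 36)) (f : ℕ)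
    (hB : IsDesign B) (hA : HasOrder2AutWithFixed B f)
    (hC : IsSelfDualCode (rowSpan B)) :
    f = 4 ∨ f = 12 := by
  obtain ⟨hk, hl⟩ := hB
  obtain ⟨φ, ψ, hψ, hφφ, hφ1, rfl⟩ := hA
  have hφ : Function.Involutive φ := congrFun hφφ
  have hr (x : Fin 36) : #{i | x ∈ B i} = 15 := by
    have := card_blocks_through_mul B hk hl x
    simp only [Fintype.card_fin] at this
    omega
  have hinter (i j : Fin 36) (hij : i ≠ j) : #(B i ∩ B j) = 6 :=
    card_inter_eq_of_symmetric B hk hl hr (by simp) hij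
  obtain ⟨i, hi⟩ := exists_image_ne_of_ne_one B hl (fun x => by rw [hr x]; norm_num)
    (φ := φ) (fun h => hφ1 (by rw [h]; rfl))
  have hbound := card_fixed_add_two_mul_le B hk hinter (hψ i) (by rwa [hψ i])
  have hcount := card_fixed_add_two_mul_card_movedUp hφ
  have h4 := four_dvd_card_of_selfDual (K := ZMod 3) (by decide)
    (selfDual_restrictNegEigen (by decide) hφ hC fun c hc => comp_mem_rowSpan hψ hφ hc)
  simp only [Fintype.card_coe, Fintype.card_fin] at h4 hbound hcount
  omega
end
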